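/- arXiv:2012.15141 — 3 statements merged into one kernel-verified Lean document; each statement's English description precedes it below -/
import Mathlib

section
/- Let Γ be a connected weighted graph, and for a cyclic subgraph P of Γ set E_P = E(Γ)\E(P) and define the divisor D_P on the graph Γ^{E_P} (Γ with one vertex inserted in the interior of each edge in E_P) by D_P(v) = deg_Γ(v) - deg_P(v)/2 - 1 + w(v) for v ∈ V(Γ) and D_P(w_e) = -1 for each inserted (exceptional) vertex w_e. Then (E_P, D_P) is a polystable pseudo-root of Γ with respect to the canonical polarization of degree g-1. Conversely, every polystable pseudo-root of Γ is of the form (E_P, D_P) for a unique cyclic subgraph P. In particular, Γ admits exactly 2^{b_1(Γ)} polystable pseudo-roots. -/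
/-! A common framework for weighted multigraphs, divisors, flows,
subdivisions, pseudo-divisors and specializations, following
"The moduli space of quasistable spin curves". -/

noncomputable section

/-- A finite weighted multigraph (with a reference orientation of each edge). -/
structure WGraph where
  V : Type
  E : Type
  [fintV : Fintype V]
  [decV : DecidableEq V]
  [fintE : Fintype E]
  [decE : DecidableEq E]
  src : E → V
  tgt : E → V
  w : V → ℕ

namespace WGraph

attribute [instance] WGraph.fintV WGraph.decV WGraph.fintE WGraph.decE

attribute [local instance] Classical.propDecidable

variable (G : WGraph)

/-- Degree of a vertex (loops count twice). -/
def deg (v : G.V) : ℕ :=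
  (Finset.univ.filter (fun e => G.src e = v)).card +
    (Finset.univ.filter (fun e => G.tgt e = v)).card

/-- Degree of a vertex in the edge set `A` (loops count twice). -/
def degIn (A : Finset G.E) (v : G.V) : ℕ :=
  (A.filter (fun e => G.src e = v)).card + (A.filter (fun e => G.tgt e = v)).card

/-- Canonical divisor: `K(v) = 2 w(v) - 2 + deg(v)`. -/
def K (v : G.V) : ℤ := 2 * (G.w v : ℤ) - 2 + (G.deg v : ℤ)

/-- Canonical polarization of degree `g - 1`. -/
def canPol (v : G.V) : ℚ := (G.K v : ℚ) / 2

/-- Oriented edges: `(e, true)` is `src → tgt`, `(e, false)` is the reverse. -/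
abbrev OEdge := G.E × Bool

def osrc (oe : G.OEdge) : G.V := if oe.2 then G.src oe.1 else G.tgt oe.1

def otgt (oe : G.OEdge) : G.V := if oe.2 then G.tgt oe.1 else G.src oe.1

/-- A flow is recorded by its values along the reference orientation;
`flowVal` gives its value on an oriented edge. -/
def flowVal (φ : G.E → ℤ) (oe : G.OEdge) : ℤ := if oe.2 then φ oe.1 else -φ oe.1

/-- The divisor of a flow: `Div(φ)(v) = ∑_{t(e) = v} φ(e)` over oriented edges. -/
def divOf (φ : G.E → ℤ) (v : G.V) : ℤ :=
  (∑ e : G.E, if G.tgt e = v then φ e else 0) -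
    ∑ e : G.E, if G.src e = v then φ e else 0

/-- `e` has exactly one endpoint in `W`. -/
def crossing (W : Finset G.V) (e : G.E) : Prop := (G.src e ∈ W) ≠ (G.tgt e ∈ W)

/-- Number of edges between `W` and its complement. -/
def delta (W : Finset G.V) : ℕ := (Finset.univ.filter (fun e => G.crossing W e)).card

/-- `β_D(W) = deg(D|_W) - μ(W) + δ_W / 2`. -/
def beta (μ : G.V → ℚ) (D : G.V → ℤ) (W : Finset G.V) : ℚ :=
  (∑ v ∈ W, (D v : ℚ)) - (∑ v ∈ W, μ v) + (G.delta W : ℚ) / 2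

def Semistable (μ : G.V → ℚ) (D : G.V → ℤ) : Prop :=
  ∀ W : Finset G.V, W ≠ Finset.univ → 0 ≤ G.beta μ D W

def Stable (μ : G.V → ℚ) (D : G.V → ℤ) : Prop :=
  ∀ W : Finset G.V, W ≠ Finset.univ → W.Nonempty → 0 < G.beta μ D W

def Quasistable (μ : G.V → ℚ) (v₀ : G.V) (D : G.V → ℤ) : Prop :=
  ∀ W : Finset G.V, W ≠ Finset.univ →
    (0 ≤ G.beta μ D W ∧ (v₀ ∈ W → 0 < G.beta μ D W))

/-- An oriented cycle: a nonempty cyclically closed chain of oriented edges,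
with pairwise distinct underlying edges and pairwise distinct vertices. -/
def IsOrientedCycle (c : List G.OEdge) : Prop :=
  c ≠ [] ∧ (c.map Prod.fst).Nodup ∧ (c.map G.osrc).Nodup ∧
    ∀ i : Fin c.length,
      G.otgt (c.get i) = G.osrc (c.get ⟨((i : ℕ) + 1) % c.length, Nat.mod_lt _ i.pos⟩)

/-- A flow is acyclic if there is no oriented cycle on which it is
nonnegative and somewhere positive. -/
def Acyclic (φ : G.E → ℤ) : Prop :=
  ¬∃ c : List G.OEdge, G.IsOrientedCycle c ∧ (∀ oe ∈ c, 0 ≤ G.flowVal φ oe) ∧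
      ∃ oe ∈ c, 0 < G.flowVal φ oe

/-- Adjacency through an edge of `A`. -/
def adjVia (A : Finset G.E) (a b : G.V) : Prop :=
  ∃ e ∈ A, (G.src e = a ∧ G.tgt e = b) ∨ (G.src e = b ∧ G.tgt e = a)

/-- Reachability using only edges of `A`. -/
def ReachVia (A : Finset G.E) : G.V → G.V → Prop := Relation.ReflTransGen (G.adjVia A)

def Connected : Prop := Nonempty G.V ∧ ∀ u v : G.V, G.ReachVia Finset.univ u v

/-- A cyclic subgraph: a set of edges in which every vertex has even degree. -/
def IsCyclicSubgraph (P : Finset G.E) : Prop := ∀ v : G.V, Even (G.degIn P v)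

/-- The characteristic flow of a vertex. -/
def charFlow (v₀ : G.V) (e : G.E) : ℤ :=
  if G.src e = v₀ ∧ G.tgt e ≠ v₀ then 1
  else if G.tgt e = v₀ ∧ G.src e ≠ v₀ then -1 else 0

/-- `Div(v₀)`, the principal divisor attached to a vertex. -/
def DivV (v₀ : G.V) : G.V → ℤ := G.divOf (G.charFlow v₀)

/-- Principal divisors are integer combinations of the `Div(v)`. -/
def Principal (D : G.V → ℤ) : Prop :=
  ∃ a : G.V → ℤ, ∀ v, D v = ∑ u : G.V, a u * G.DivV u v

/-- Number of connected components of the subgraph with all vertices and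
edge set `A`. -/
def numComponents (A : Finset G.E) : ℕ :=
  (Finset.univ.image (fun v => Finset.univ.filter (fun u => G.ReachVia A v u))).card

/-- The subdivision `Γ^S`: one exceptional vertex inserted in each edge of `S`. -/
def subdiv (S : Finset G.E) : WGraph where
  V := G.V ⊕ {e // e ∈ S}
  E := {e // e ∉ S} ⊕ {e // e ∈ S} × Bool
  src := fun x =>
    match x with
    | .inl e => .inl (G.src e.1)
    | .inr (e, b) => if b then .inr e else .inl (G.src e.1)
  tgt := fun x =>
    match x with
    | .inl e => .inl (G.tgt e.1)
    | .inr (e, b) => if b then .inl (G.tgt e.1) else .inr e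
  w := fun v =>
    match v with
    | .inl v => G.w v
    | .inr _ => 0

/-- A pseudo-divisor: value `-1` on every exceptional vertex. -/
def IsPseudoDivisor (S : Finset G.E) (D : (G.subdiv S).V → ℤ) : Prop :=
  ∀ x : {e // e ∈ S}, D (Sum.inr x) = -1

/-- A pseudo-root: `2 D + Div(φ) = K_{Γ^S}` for some acyclic flow `φ` on `Γ^S`. -/
def IsPseudoRoot (S : Finset G.E) (D : (G.subdiv S).V → ℤ) : Prop :=
  G.IsPseudoDivisor S D ∧
    ∃ φ : (G.subdiv S).E → ℤ, (G.subdiv S).Acyclic φ ∧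
      ∀ v, 2 * D v + (G.subdiv S).divOf φ v = (G.subdiv S).K v

/-- Semistability of a pseudo-divisor: semistability on the subdivision with
respect to the (extended) canonical polarization. -/
def IsSemistablePR (S : Finset G.E) (D : (G.subdiv S).V → ℤ) : Prop :=
  (G.subdiv S).Semistable (G.subdiv S).canPol D

/-- `β_{E,D}` for pseudo-divisors, on subsets of the original vertices. -/
def betaPoly (S : Finset G.E) (D : (G.subdiv S).V → ℤ) (W : Finset G.V) : ℚ :=
  (∑ v ∈ W, (D (Sum.inl v) : ℚ)) -
    (∑ v ∈ W, (G.canPol v + (G.degIn S v : ℚ) / 2)) +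
    ((Finset.univ.filter (fun e => e ∉ S ∧ G.crossing W e)).card : ℚ) / 2

/-- Polystability of a pseudo-divisor. -/
def IsPolystable (S : Finset G.E) (D : (G.subdiv S).V → ℤ) : Prop :=
  ∀ W : Finset G.V,
    0 ≤ G.betaPoly S D W ∧ ((∃ e, e ∉ S ∧ G.crossing W e) → 0 < G.betaPoly S D W)

/-- The divisor `D_P` attached to a cyclic subgraph `P`, on `Γ^{E_P}` with
`E_P = Pᶜ`. -/
def DP (P : Finset G.E) : (G.subdiv Pᶜ).V → ℤ := fun x =>
  match x with
  | .inl v => (G.deg v : ℤ) - (G.degIn P v : ℤ) / 2 - 1 + (G.w v : ℤ)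
  | .inr _ => -1

/-- The data of a semistable root-graph together with its acyclic flow. -/
def IsSemistableRootTriple (S : Finset G.E) (D : (G.subdiv S).V → ℤ)
    (φ : (G.subdiv S).E → ℤ) : Prop :=
  G.IsPseudoDivisor S D ∧ G.IsSemistablePR S D ∧ (G.subdiv S).Acyclic φ ∧
    ∀ v, 2 * D v + (G.subdiv S).divOf φ v = (G.subdiv S).K v

/-- The induced subgraph on a vertex set `W`. -/
def induce (W : Finset G.V) : WGraph where
  V := {v // v ∈ W}
  E := {e // G.src e ∈ W ∧ G.tgt e ∈ W}
  src := fun e => ⟨G.src e.1, e.2.1⟩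
  tgt := fun e => ⟨G.tgt e.1, e.2.2⟩
  w := fun v => G.w v.1

/-- Number of edges between `W` and `Wᶜ` incident to `v`. -/
def degCross (W : Finset G.V) (v : G.V) : ℕ :=
  (Finset.univ.filter (fun e => G.src e = v ∧ G.crossing W e)).card +
    (Finset.univ.filter (fun e => G.tgt e = v ∧ G.crossing W e)).card

/-- A specialization (iterated edge contraction) of weighted graphs. -/
structure Spec (G G' : WGraph) where
  vmap : G.V → G'.V
  emap : G'.E → G.E
  emap_inj : Function.Injective emap
  vmap_surj : Function.Surjective vmap
  src_comm : ∀ e', vmap (G.src (emap e')) = G'.src e'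
  tgt_comm : ∀ e', vmap (G.tgt (emap e')) = G'.tgt e'
  contract_eq : ∀ e : G.E, e ∉ Finset.univ.image emap → vmap (G.src e) = vmap (G.tgt e)
  fiber_conn : ∀ u v : G.V, vmap u = vmap v →
    Relation.ReflTransGen
      (fun a b => ∃ e, e ∉ Finset.univ.image emap ∧
        ((G.src e = a ∧ G.tgt e = b) ∨ (G.src e = b ∧ G.tgt e = a))) u v
  weight_eq : ∀ v' : G'.V,
    (G'.w v' : ℤ) =
      (∑ v ∈ Finset.univ.filter (fun v => vmap v = v'), (G.w v : ℤ)) +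
        ((Finset.univ.filter (fun e : G.E =>
            e ∉ Finset.univ.image emap ∧ vmap (G.src e) = v')).card : ℤ) -
        ((Finset.univ.filter (fun v : G.V => vmap v = v')).card : ℤ) + 1

/-- Pushforward of a divisor along a specialization. -/
def Spec.pushDiv {G G' : WGraph} (σ : Spec G G') (D : G.V → ℤ) : G'.V → ℤ :=
  fun v' => ∑ v ∈ Finset.univ.filter (fun v => σ.vmap v = v'), D v

/-- Pushforward of a polarization along a specialization. -/
def Spec.pushPol {G G' : WGraph} (σ : Spec G G') (μ : G.V → ℚ) : G'.V → ℚ :=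
  fun v' => ∑ v ∈ Finset.univ.filter (fun v => σ.vmap v = v'), μ v

/-- The induced map on vertices of subdivisions. -/
def Spec.subdivVmap {G G' : WGraph} (σ : Spec G G') (S : Finset G.E)
    (S' : Finset G'.E) : (G.subdiv S).V → (G'.subdiv S').V := fun x =>
  match x with
  | .inl v => .inl (σ.vmap v)
  | .inr e =>
    if h : ∃ e' : {e' // e' ∈ S'}, σ.emap e'.1 = e.1 then .inr h.choose
    else .inl (σ.vmap (G.src e.1))

/-- Pushforward of a pseudo-divisor (its divisor part) along a specialization. -/
def Spec.pushSubdivDiv {G G' : WGraph} (σ : Spec G G') (S : Finset G.E)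
    (S' : Finset G'.E) (D : (G.subdiv S).V → ℤ) : (G'.subdiv S').V → ℤ := fun y =>
  ∑ x ∈ Finset.univ.filter (fun x => σ.subdivVmap S S' x = y), D x

/-- Extension by zero along the edge injection of a specialization. -/
def Spec.extendBy {G G' : WGraph} (σ : Spec G G') (x : G'.E → ℝ) : G.E → ℝ :=
  fun e => if h : ∃ e', σ.emap e' = e then x h.choose else 0

/-- Same-graph contraction of subdivisions (for `S ⊆ S'`): the vertex map.
`σb e` selects the endpoint to which the exceptional vertex of a contracted
edge `e ∈ S' \ S` is merged (`true` = target, `false` = source). -/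
def contrVmap (S S' : Finset G.E) (σb : G.E → Bool) :
    (G.subdiv S').V → (G.subdiv S).V := fun x =>
  match x with
  | .inl v => .inl v
  | .inr e =>
    if h : e.1 ∈ S then .inr ⟨e.1, h⟩
    else .inl (if σb e.1 then G.tgt e.1 else G.src e.1)

/-- Same-graph contraction of subdivisions: the edge injection. -/
def contrEmap (S S' : Finset G.E) (hSS : S ⊆ S') (σb : G.E → Bool) :
    (G.subdiv S).E → (G.subdiv S').E := fun x =>
  match x with
  | .inl e =>
    if h : e.1 ∈ S' then .inr (⟨e.1, h⟩, !σb e.1) else .inl ⟨e.1, h⟩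
  | .inr eb => .inr (⟨eb.1.1, hSS eb.1.2⟩, eb.2)

/-- Specialization of pseudo-divisors over a fixed graph. -/
def PDSpec (S' : Finset G.E) (D' : (G.subdiv S').V → ℤ) (S : Finset G.E)
    (D : (G.subdiv S).V → ℤ) : Prop :=
  S ⊆ S' ∧ ∃ σb : G.E → Bool,
    ∀ v, D v = ∑ x ∈ Finset.univ.filter (fun x => G.contrVmap S S' σb x = v), D' x

/-- Specialization of semistable root-graphs over a fixed graph: a
specialization of pseudo-divisors pushing the acyclic flow forward. -/
def RootSpec (S' : Finset G.E) (D' : (G.subdiv S').V → ℤ) (S : Finset G.E)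
    (D : (G.subdiv S).V → ℤ) : Prop :=
  ∃ hSS : S ⊆ S', ∃ σb : G.E → Bool,
    (∀ v, D v = ∑ x ∈ Finset.univ.filter (fun x => G.contrVmap S S' σb x = v), D' x) ∧
    ∀ φ' φ : _, (G.subdiv S').Acyclic φ' →
      (∀ v, 2 * D' v + (G.subdiv S').divOf φ' v = (G.subdiv S').K v) →
      (G.subdiv S).Acyclic φ →
      (∀ v, 2 * D v + (G.subdiv S).divOf φ v = (G.subdiv S).K v) →
      ∀ x, φ x = φ' (G.contrEmap S S' hSS σb x)

/-- Underlying edge of `Γ` of an edge of `Γ^S`. -/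
def underE (S : Finset G.E) : (G.subdiv S).E → G.E := fun x =>
  match x with
  | .inl e => e.1
  | .inr eb => eb.1.1

/-- A specialization of triples `(Γ, E, D) ≥ (Γ', E', D')`. -/
structure TripleSpec (G : WGraph) (S : Finset G.E) (D : (G.subdiv S).V → ℤ)
    (G' : WGraph) (S' : Finset G'.E) (D' : (G'.subdiv S').V → ℤ) where
  base : Spec G G'
  sub : Spec (G.subdiv S) (G'.subdiv S')
  vcomm : ∀ v : G.V, sub.vmap (Sum.inl v) = Sum.inl (base.vmap v)
  ecomm : ∀ x : (G'.subdiv S').E, G.underE S (sub.emap x) = base.emap (G'.underE S' x)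
  edges_sub : ∀ e' ∈ S', base.emap e' ∈ S
  push_eq : ∀ y, D' y = ∑ x ∈ Finset.univ.filter (fun x => sub.vmap x = y), D x

/-- A triple specialization is a specialization of root-graphs when it pushes
the (unique) acyclic flows forward. -/
def TripleSpec.IsRootSpec {G : WGraph} {S : Finset G.E} {D : (G.subdiv S).V → ℤ}
    {G' : WGraph} {S' : Finset G'.E} {D' : (G'.subdiv S').V → ℤ}
    (T : TripleSpec G S D G' S' D') : Prop :=
  ∀ φ φ', (G.subdiv S).Acyclic φ →
    (∀ v, 2 * D v + (G.subdiv S).divOf φ v = (G.subdiv S).K v) →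
    (G'.subdiv S').Acyclic φ' →
    (∀ v, 2 * D' v + (G'.subdiv S').divOf φ' v = (G'.subdiv S').K v) →
    ∀ x, φ' x = φ (T.sub.emap x)

/-- The cone `λ` attached to a flow: nonnegative orthant cut by the cycle
equations. -/
def lambdaSet (φ : G.E → ℤ) : Set (G.E → ℝ) :=
  {x | (∀ e, 0 ≤ x e) ∧ ∀ c : List G.OEdge, G.IsOrientedCycle c →
      ((c.map (fun oe => (G.flowVal φ oe : ℝ) * x oe.1)).sum) = 0}

/-- Its relative interior (intersection with the positive orthant). -/
def lambdaInt (φ : G.E → ℤ) : Set (G.E → ℝ) :=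
  {x | (∀ e, 0 < x e) ∧ ∀ c : List G.OEdge, G.IsOrientedCycle c →
      ((c.map (fun oe => (G.flowVal φ oe : ℝ) * x oe.1)).sum) = 0}

/-- Faces of a cone (supporting-hyperplane definition). -/
def IsFaceOf (F C : Set (G.E → ℝ)) : Prop :=
  F = C ∨ ∃ l : (G.E → ℝ) →ₗ[ℝ] ℝ, (∀ x ∈ C, 0 ≤ l x) ∧ F = C ∩ {x | l x = 0}

/-- Facets: faces of codimension one. -/
def IsFacetOf (F C : Set (G.E → ℝ)) : Prop :=
  G.IsFaceOf F C ∧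
    Module.finrank ℝ (Submodule.span ℝ F) + 1 = Module.finrank ℝ (Submodule.span ℝ C)

/-- The vector `u_V` spanning the subspace `L_E`. -/
def uVec (S : Finset G.E) (W : Finset G.V) : (G.subdiv S).E → ℝ := fun x =>
  match x with
  | .inl _ => 0
  | .inr eb =>
    if G.crossing W eb.1.1 then
      (if (if eb.2 then G.tgt eb.1.1 else G.src eb.1.1) ∈ W then 1 else -1)
    else 0

/-- The subspace `L_E ⊆ ℝ^{E(Γ^S)}`. -/
def LSub (S : Finset G.E) : Submodule ℝ ((G.subdiv S).E → ℝ) :=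
  Submodule.span ℝ {u | ∃ W : Finset G.V, (∀ e, G.crossing W e → e ∈ S) ∧ u = G.uVec S W}

/-- The diagonal map `δ_E : ℝ^{E(Γ)} → ℝ^{E(Γ^S)}`. -/
def deltaMap (S : Finset G.E) (x : G.E → ℝ) : (G.subdiv S).E → ℝ := fun e' =>
  match e' with
  | .inl e => x e.1
  | .inr eb => x eb.1.1

/-- One step of a `φ`-path avoiding the edges of `A`. -/
def phiStep (φ : G.E → ℤ) (A : Finset G.E) (a b : G.V) : Prop :=
  ∃ oe : G.OEdge, oe.1 ∉ A ∧ 0 ≤ G.flowVal φ oe ∧ G.osrc oe = a ∧ G.otgt oe = b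

/-- Reachability by `φ`-paths avoiding the edges of `A`. -/
def PhiReach (φ : G.E → ℤ) (A : Finset G.E) : G.V → G.V → Prop :=
  Relation.ReflTransGen (G.phiStep φ A)

/-- The refinement of `Γ` inserting `m e` vertices in the interior of each
edge `e`. -/
def refine (m : G.E → ℕ) : WGraph where
  V := G.V ⊕ (Σ e : G.E, Fin (m e))
  E := Σ e : G.E, Fin (m e + 1)
  src := fun x =>
    if h : (x.2 : ℕ) = 0 then .inl (G.src x.1)
    else .inr ⟨x.1, ⟨(x.2 : ℕ) - 1, by have := x.2.isLt; omega⟩⟩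
  tgt := fun x =>
    if h : (x.2 : ℕ) = m x.1 then .inl (G.tgt x.1)
    else .inr ⟨x.1, ⟨(x.2 : ℕ), by have := x.2.isLt; omega⟩⟩
  w := fun v =>
    match v with
    | .inl v => G.w v
    | .inr _ => 0

end WGraph

attribute [local instance] Classical.propDecidable

/-!
A pseudo-root flow `φ` on `Γ^E` satisfies `2 D + Div φ = K`; at an exceptional vertex this forces
the two halves of a subdivided edge to carry flows differing by `2`, so `φ` induces a reduced flow
`ψ` on `Γ` with `2 β_{E,D}(W) = #{edges outside E crossing W} - (net inflow of ψ into W)`.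
Let `W` be the set of vertices reachable from a given one along half-edges of nonnegative flow.
Every edge outside `E` crossing `W` brings at least one unit of `ψ` into `W`, so polystability
forces equality throughout: no edge outside `E` crosses `W` and `ψ` vanishes on crossing edges.
An edge inside `W` with `ψ ≠ 0` would close a nonnegative cycle through a positive half-edge,
which acyclicity forbids. Hence `ψ = 0`, which pins `D` down to `D_P` with `P = Eᶜ` cyclic.
Conversely, the flow sending one unit into each exceptional vertex from both sides is acyclic
and exhibits `(E_P, D_P)` as a pseudo-root with `β = #{edges of P crossing W} / 2`.
Cyclic subgraphs form the kernel of the mod-2 incidence map of `Γ`, whose image has dimension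
`#V - 1` when `Γ` is connected.
-/

namespace WGraph

section Acyclicity

variable {H : WGraph}

@[simp] lemma osrc_true (x : H.E) : H.osrc (x, true) = H.src x := rfl
@[simp] lemma otgt_true (x : H.E) : H.otgt (x, true) = H.tgt x := rfl
@[simp] lemma osrc_false (x : H.E) : H.osrc (x, false) = H.tgt x := rfl
@[simp] lemma otgt_false (x : H.E) : H.otgt (x, false) = H.src x := rfl
@[simp] lemma flowVal_true (φ : H.E → ℤ) (x : H.E) : H.flowVal φ (x, true) = φ x := rfl
@[simp] lemma flowVal_false (φ : H.E → ℤ) (x : H.E) : H.flowVal φ (x, false) = -φ x := rfl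

lemma osrc_not (e : H.E) (b : Bool) : H.osrc (e, !b) = H.otgt (e, b) := by cases b <;> rfl

lemma flowVal_not (φ : H.E → ℤ) (e : H.E) (b : Bool) :
    H.flowVal φ (e, !b) = -H.flowVal φ (e, b) := by cases b <;> simp

lemma phiReach_of_flowVal_nonneg {φ : H.E → ℤ} {o : H.OEdge} (h : 0 ≤ H.flowVal φ o) :
    H.PhiReach φ ∅ (H.osrc o) (H.otgt o) :=
  .single ⟨o, Finset.notMem_empty _, h, rfl, rfl⟩

def IsWalk (H : WGraph) : List H.OEdge → H.V → H.V → Prop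
  | [], a, b => a = b
  | o :: L, a, b => H.osrc o = a ∧ H.IsWalk L (H.otgt o) b

lemma IsWalk.append {L L' : List H.OEdge} {a b c : H.V} (h : H.IsWalk L a b)
    (h' : H.IsWalk L' b c) : H.IsWalk (L ++ L') a c := by
  induction L generalizing a with
  | nil => exact (show a = b from h) ▸ h'
  | cons o L ih => exact ⟨h.1, ih h.2⟩

lemma exists_isWalk_of_phiReach {φ : H.E → ℤ} {A : Finset H.E} {a b : H.V}
    (h : H.PhiReach φ A a b) :
    ∃ L : List H.OEdge, H.IsWalk L a b ∧ ∀ o ∈ L, o.1 ∉ A ∧ 0 ≤ H.flowVal φ o := by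
  induction h with
  | refl => exact ⟨[], rfl, by simp⟩
  | tail _ hstep ih =>
    obtain ⟨L, hL, hLf⟩ := ih
    obtain ⟨o, hoA, ho, hsrc, htgt⟩ := hstep
    refine ⟨L ++ [o], hL.append ⟨hsrc, htgt⟩, fun o' ho' => ?_⟩
    rcases List.mem_append.1 ho' with h | h
    · exact hLf o' h
    · exact (List.mem_singleton.1 h) ▸ ⟨hoA, ho⟩

lemma IsWalk.exists_suffix {L : List H.OEdge} {a b c : H.V} (h : H.IsWalk L a b)
    (hc : c ∈ L.map H.osrc) : ∃ L', L' <:+ L ∧ H.IsWalk L' c b := by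
  induction L generalizing a with
  | nil => simp at hc
  | cons o L ih =>
    by_cases ho : H.osrc o = c
    · exact ⟨o :: L, List.suffix_refl _, ho, h.2⟩
    · obtain ⟨L', hsuf, hL'⟩ := ih h.2 ((List.mem_cons.1 hc).resolve_left (Ne.symm ho))
      exact ⟨L', hsuf.trans (List.suffix_cons o L), hL'⟩

lemma IsWalk.exists_path {L : List H.OEdge} {a b : H.V} (h : H.IsWalk L a b) :
    ∃ L', L'.Sublist L ∧ H.IsWalk L' a b ∧ (b :: L'.map H.osrc).Nodup := by
  induction L generalizing a with
  | nil => exact ⟨[], List.nil_sublist _, h, by simp⟩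
  | cons o L ih =>
    obtain ⟨L', hsub, hL', hnd⟩ := ih h.2
    by_cases hab : a = b
    · exact ⟨[], List.nil_sublist _, hab, by simp⟩
    by_cases ha : a ∈ L'.map H.osrc
    · obtain ⟨L'', hsuf, hL''⟩ := hL'.exists_suffix ha
      exact ⟨L'', hsuf.sublist.trans (hsub.trans (List.sublist_cons_self o L)), hL'',
        hnd.sublist ((hsuf.sublist.map _).cons_cons b)⟩
    · refine ⟨o :: L', hsub.cons_cons o, ⟨h.1, hL'⟩, ?_⟩
      rw [List.nodup_cons] at hnd
      simp only [List.map_cons, h.1]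
      exact List.nodup_cons.2 ⟨by simp [Ne.symm hab, hnd.1], List.nodup_cons.2 ⟨ha, hnd.2⟩⟩

lemma IsWalk.osrc_getElem_zero {L : List H.OEdge} {a b : H.V} (h : H.IsWalk L a b)
    (hL : 0 < L.length) : H.osrc L[0] = a := by
  cases L with
  | nil => simp at hL
  | cons o L => exact h.1

lemma IsWalk.otgt_getElem {L : List H.OEdge} {a b : H.V} (h : H.IsWalk L a b) (i : ℕ)
    (hi : i < L.length) :
    H.otgt L[i] = if hi' : i + 1 < L.length then H.osrc L[i + 1] else b := by
  induction L generalizing a i with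
  | nil => simp at hi
  | cons o L ih =>
    cases i with
    | zero =>
      cases L with
      | nil => exact h.2
      | cons o' L => exact h.2.1.symm
    | succ i => simpa using ih h.2 i (by simpa using hi)

lemma IsWalk.otgt_get_eq_osrc_get_succ {L : List H.OEdge} {a : H.V} (h : H.IsWalk L a a)
    (i : Fin L.length) :
    H.otgt (L.get i) = H.osrc (L.get ⟨(i + 1) % L.length, Nat.mod_lt _ i.pos⟩) := by
  simp only [List.get_eq_getElem, h.otgt_getElem]
  split_ifs with hi
  · simp [Nat.mod_eq_of_lt hi]
  · have : (i + 1) % L.length = 0 := by rw [show (i : ℕ) + 1 = L.length by omega, Nat.mod_self]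
    simp [this, h.osrc_getElem_zero i.pos]

lemma eq_of_osrc_get_eq {c : List H.OEdge} (hsrc : (c.map H.osrc).Nodup) {i j : Fin c.length}
    (h : H.osrc (c.get i) = H.osrc (c.get j)) : i = j :=
  Fin.ext ((hsrc.getElem_inj_iff (i := i) (j := j) (hi := by simp) (hj := by simp)).1
    (by simpa using h))

lemma eq_not_of_fst_eq {c : List H.OEdge}
    (hchain : ∀ i : Fin c.length,
      H.otgt (c.get i) = H.osrc (c.get ⟨(i + 1) % c.length, Nat.mod_lt _ i.pos⟩))
    (hsrc : (c.map H.osrc).Nodup) {i j : Fin c.length} (hij : i ≠ j)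
    (h : (c.get i).1 = (c.get j).1) :
    c.length = 2 ∧ c.get j = ((c.get i).1, !(c.get i).2) := by
  have hj : c.get j = ((c.get i).1, !(c.get i).2) := by
    refine Prod.ext h.symm ?_
    by_contra h2
    have h2' : (c.get j).2 = (c.get i).2 := by simpa using h2
    exact hij (eq_of_osrc_get_eq hsrc (congrArg H.osrc (Prod.ext h h2'.symm)))
  have hi : c.get i = ((c.get j).1, !(c.get j).2) := by rw [hj]; simp
  have hji := eq_of_osrc_get_eq (j := ⟨(i + 1) % c.length, Nat.mod_lt _ i.pos⟩) hsrc
    (by rw [hj, osrc_not]; exact hchain i)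
  have hij' := eq_of_osrc_get_eq (j := ⟨(j + 1) % c.length, Nat.mod_lt _ j.pos⟩) hsrc
    (by rw [hi, osrc_not]; exact hchain j)
  have hmod : ∀ k < c.length, (k + 1) % c.length = if k + 1 < c.length then k + 1 else 0 := by
    intro k hk
    split_ifs with hlt
    · exact Nat.mod_eq_of_lt hlt
    · rw [show k + 1 = c.length by omega, Nat.mod_self]
  have h1 := congrArg Fin.val hji
  have h2 := congrArg Fin.val hij'
  simp only [hmod _ i.2, hmod _ j.2] at h1 h2
  refine ⟨?_, hj⟩
  have := Fin.val_ne_of_ne hij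
  split_ifs at h1 h2 <;> omega

lemma nodup_map_fst_of_closed {φ : H.E → ℤ} {c : List H.OEdge}
    (hchain : ∀ i : Fin c.length,
      H.otgt (c.get i) = H.osrc (c.get ⟨(i + 1) % c.length, Nat.mod_lt _ i.pos⟩))
    (hsrc : (c.map H.osrc).Nodup) (hnn : ∀ o ∈ c, 0 ≤ H.flowVal φ o)
    (hpos : ∃ o ∈ c, 0 < H.flowVal φ o) : (c.map Prod.fst).Nodup := by
  refine (hsrc.of_map _).map_on fun x hx y hy hxy => ?_
  by_contra hne
  obtain ⟨i, rfl⟩ := List.mem_iff_get.1 hx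
  obtain ⟨j, rfl⟩ := List.mem_iff_get.1 hy
  have hij : i ≠ j := fun h => hne (congrArg c.get h)
  obtain ⟨hlen, hji⟩ := eq_not_of_fst_eq hchain hsrc hij hxy
  have hflow : H.flowVal φ (c.get j) = -H.flowVal φ (c.get i) := by rw [hji, flowVal_not]
  obtain ⟨o, ho, hpos⟩ := hpos
  obtain ⟨k, rfl⟩ := List.mem_iff_get.1 ho
  have hk : k = i ∨ k = j := by
    simp only [Fin.ext_iff] at hij ⊢
    omega
  have hi := hnn _ (List.get_mem c i)
  have hj := hnn _ (List.get_mem c j)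
  rcases hk with rfl | rfl <;> omega

theorem Acyclic.not_phiReach {φ : H.E → ℤ} (hA : H.Acyclic φ) {A : Finset H.E} {o : H.OEdge}
    (hpos : 0 < H.flowVal φ o) : ¬ H.PhiReach φ A (H.otgt o) (H.osrc o) := by
  intro hr
  obtain ⟨L, hL, hLf⟩ := exists_isWalk_of_phiReach hr
  obtain ⟨P, hsub, hP, hnd⟩ := hL.exists_path
  have hc : H.IsWalk (o :: P) (H.osrc o) (H.osrc o) := ⟨rfl, hP⟩
  have hnn : ∀ o' ∈ o :: P, 0 ≤ H.flowVal φ o' := by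
    simpa [hpos.le] using fun o' ho' => (hLf o' (hsub.subset ho')).2
  have hpos' : ∃ o' ∈ o :: P, 0 < H.flowVal φ o' := ⟨o, List.mem_cons_self, hpos⟩
  exact hA ⟨o :: P, ⟨List.cons_ne_nil _ _,
    nodup_map_fst_of_closed hc.otgt_get_eq_osrc_get_succ hnd hnn hpos', hnd,
    hc.otgt_get_eq_osrc_get_succ⟩, hnn, hpos'⟩

lemma acyclic_of_flowVal_neg {φ : H.E → ℤ}
    (h : ∀ o o' : H.OEdge, 0 < H.flowVal φ o → H.osrc o' = H.otgt o → H.flowVal φ o' < 0) :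
    H.Acyclic φ := by
  rintro ⟨c, ⟨-, -, -, hchain⟩, hnn, o, ho, hpos⟩
  obtain ⟨i, rfl⟩ := List.mem_iff_get.1 ho
  exact (h _ _ hpos (hchain i).symm).not_ge (hnn _ (List.get_mem _ _))

end Acyclicity

def IsRootFlow (H : WGraph) (D : H.V → ℤ) (φ : H.E → ℤ) : Prop :=
  ∀ v, 2 * D v + H.divOf φ v = H.K v

variable (G : WGraph)

section Subdivision

variable (S : Finset G.E)

@[simp] lemma subdiv_src_inl (e : {e // e ∉ S}) :
    (G.subdiv S).src (.inl e) = .inl (G.src e.1) := rfl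
@[simp] lemma subdiv_tgt_inl (e : {e // e ∉ S}) :
    (G.subdiv S).tgt (.inl e) = .inl (G.tgt e.1) := rfl
@[simp] lemma subdiv_src_inr_false (e : {e // e ∈ S}) :
    (G.subdiv S).src (.inr (e, false)) = .inl (G.src e.1) := rfl
@[simp] lemma subdiv_tgt_inr_false (e : {e // e ∈ S}) :
    (G.subdiv S).tgt (.inr (e, false)) = .inr e := rfl
@[simp] lemma subdiv_src_inr_true (e : {e // e ∈ S}) :
    (G.subdiv S).src (.inr (e, true)) = .inr e := rfl
@[simp] lemma subdiv_tgt_inr_true (e : {e // e ∈ S}) :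
    (G.subdiv S).tgt (.inr (e, true)) = .inl (G.tgt e.1) := rfl
@[simp] lemma subdiv_w_inl (v : G.V) : (G.subdiv S).w (.inl v) = G.w v := rfl
@[simp] lemma subdiv_w_inr (x : {e // e ∈ S}) : (G.subdiv S).w (.inr x) = 0 := rfl

-- `(G.subdiv S).V` is not reducible to a sum type, so these have to be stated through `@Eq`.
@[simp] lemma subdiv_inl_inj {a b : G.V} :
    @Eq (G.subdiv S).V (Sum.inl a) (Sum.inl b) ↔ a = b := Sum.inl_injective.eq_iff

@[simp] lemma subdiv_inr_inj {a b : {e // e ∈ S}} :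
    @Eq (G.subdiv S).V (Sum.inr a) (Sum.inr b) ↔ a = b := Sum.inr_injective.eq_iff

@[simp] lemma subdiv_inr_ne_inl {a : G.V} {b : {e // e ∈ S}} :
    ¬ @Eq (G.subdiv S).V (Sum.inr b) (Sum.inl a) := Sum.inr_ne_inl

lemma sum_subdiv_edges {M : Type*} [AddCommMonoid M] (f : (G.subdiv S).E → M) :
    ∑ x, f x = ∑ e : {e // e ∉ S}, f (.inl e) +
      ∑ e : {e // e ∈ S}, (f (.inr (e, false)) + f (.inr (e, true))) := by
  calc ∑ x, f x
        = ∑ e : {e // e ∉ S}, f (.inl e) + ∑ p : {e // e ∈ S} × Bool, f (.inr p) :=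
          Fintype.sum_sum_type f
    _ = _ := by rw [Fintype.sum_prod_type]; simp only [Fintype.sum_bool, add_comm]

lemma sum_notMem_add_sum_mem {M : Type*} [AddCommMonoid M] (g : G.E → M) :
    ∑ e : {e // e ∉ S}, g e + ∑ e : {e // e ∈ S}, g e = ∑ e, g e := by
  rw [add_comm]
  convert Fintype.sum_subtype_add_sum_subtype (· ∈ S) g

lemma deg_eq_sum (v : G.V) :
    G.deg v = ∑ e, ((if G.src e = v then 1 else 0) + (if G.tgt e = v then 1 else 0)) := by
  rw [deg, Finset.card_filter, Finset.card_filter, Finset.sum_add_distrib]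

lemma degIn_eq_sum (A : Finset G.E) (v : G.V) :
    G.degIn A v =
      ∑ e ∈ A, ((if G.src e = v then 1 else 0) + (if G.tgt e = v then 1 else 0)) := by
  rw [degIn, Finset.card_filter, Finset.card_filter, Finset.sum_add_distrib]

lemma degIn_add_degIn_compl (v : G.V) : G.degIn S v + G.degIn Sᶜ v = G.deg v := by
  rw [degIn_eq_sum, degIn_eq_sum, deg_eq_sum, Finset.sum_add_sum_compl]

lemma deg_subdiv_inl (v : G.V) : (G.subdiv S).deg (.inl v) = G.deg v := by
  rw [deg_eq_sum (G.subdiv S) (.inl v), deg_eq_sum, sum_subdiv_edges, ← sum_notMem_add_sum_mem]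
  congr 1 <;> refine Fintype.sum_congr _ _ fun e => ?_ <;> simp

lemma deg_subdiv_inr (x : {e // e ∈ S}) : (G.subdiv S).deg (.inr x) = 2 := by
  rw [deg_eq_sum (G.subdiv S) (.inr x), sum_subdiv_edges]
  simp [Finset.sum_add_distrib]

lemma K_subdiv_inl (v : G.V) : (G.subdiv S).K (.inl v) = G.K v := by
  simp [K, deg_subdiv_inl]

lemma K_subdiv_inr (x : {e // e ∈ S}) : (G.subdiv S).K (.inr x) = 0 := by
  simp [K, deg_subdiv_inr]

lemma divOf_subdiv_inr (φ : (G.subdiv S).E → ℤ) (x : {e // e ∈ S}) :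
    (G.subdiv S).divOf φ (.inr x) = φ (.inr (x, false)) - φ (.inr (x, true)) := by
  simp [divOf, sum_subdiv_edges]

/-- When the two halves of each subdivided edge carry flows differing by `2` (as for a
pseudo-root), the reduced flow is their average. -/
def reducedFlow (φ : (G.subdiv S).E → ℤ) (e : G.E) : ℤ :=
  if h : e ∈ S then φ (.inr (⟨e, h⟩, false)) - 1 else φ (.inl ⟨e, h⟩)

variable {S}

@[simp] lemma reducedFlow_of_not_mem (φ : (G.subdiv S).E → ℤ) (e : {e // e ∉ S}) :
    G.reducedFlow S φ e = φ (.inl e) := dif_neg e.2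

@[simp] lemma reducedFlow_of_mem (φ : (G.subdiv S).E → ℤ) (e : {e // e ∈ S}) :
    G.reducedFlow S φ e = φ (.inr (e, false)) - 1 := dif_pos e.2

lemma divOf_subdiv_inl {φ : (G.subdiv S).E → ℤ}
    (hb : ∀ x : {e // e ∈ S}, φ (.inr (x, false)) - φ (.inr (x, true)) = 2) (v : G.V) :
    (G.subdiv S).divOf φ (.inl v) = G.divOf (G.reducedFlow S φ) v - G.degIn S v := by
  unfold divOf
  rw [sum_subdiv_edges, sum_subdiv_edges, ← sum_notMem_add_sum_mem G S,
    ← sum_notMem_add_sum_mem G S,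
    degIn_eq_sum, ← Finset.sum_coe_sort S, add_sub_add_comm, add_sub_add_comm,
    ← Finset.sum_sub_distrib, ← Finset.sum_sub_distrib, ← Finset.sum_sub_distrib,
    ← Finset.sum_sub_distrib]
  push_cast
  rw [add_sub_assoc, ← Finset.sum_sub_distrib]
  congr 1 <;> refine Fintype.sum_congr _ _ fun e => ?_
  · simp
  · have := hb e
    simp only [subdiv_tgt_inr_false, subdiv_tgt_inr_true,
      subdiv_src_inr_false, subdiv_src_inr_true, subdiv_inl_inj, subdiv_inr_ne_inl, if_false,
      reducedFlow_of_mem]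
    split_ifs <;> linarith

end Subdivision

section PseudoRoot

variable {G} {S : Finset G.E} {D : (G.subdiv S).V → ℤ} {φ : (G.subdiv S).E → ℤ}

lemma IsRootFlow.sub_eq_two (hD : G.IsPseudoDivisor S D) (hφ : (G.subdiv S).IsRootFlow D φ)
    (x : {e // e ∈ S}) : φ (.inr (x, false)) - φ (.inr (x, true)) = 2 := by
  have := hφ (.inr x)
  rw [divOf_subdiv_inr, K_subdiv_inr, hD x] at this
  omega

lemma sum_divOf (ψ : G.E → ℤ) (W : Finset G.V) :
    ∑ v ∈ W, G.divOf ψ v =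
      ∑ e, ψ e * ((if G.tgt e ∈ W then 1 else 0) - (if G.src e ∈ W then 1 else 0)) := by
  simp only [divOf, Finset.sum_sub_distrib]
  rw [Finset.sum_comm, Finset.sum_comm (s := W), ← Finset.sum_sub_distrib]
  refine Fintype.sum_congr _ _ fun e => ?_
  rw [Finset.sum_ite_eq W (G.tgt e) (fun _ => ψ e), Finset.sum_ite_eq W (G.src e) (fun _ => ψ e)]
  split_ifs <;> ring

lemma two_mul_betaPoly (hD : G.IsPseudoDivisor S D) (hφ : (G.subdiv S).IsRootFlow D φ)
    (W : Finset G.V) :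
    2 * G.betaPoly S D W = (((Finset.univ.filter fun e => e ∉ S ∧ G.crossing W e).card : ℤ) -
      ∑ v ∈ W, G.divOf (G.reducedFlow S φ) v : ℤ) := by
  have hv : ∀ v, (2 * D (.inl v) : ℚ) =
      G.K v + G.degIn S v - G.divOf (G.reducedFlow S φ) v := by
    intro v
    have := hφ (.inl v)
    rw [divOf_subdiv_inl G (hφ.sub_eq_two hD), K_subdiv_inl] at this
    exact_mod_cast (by linarith : 2 * D (.inl v) = G.K v + G.degIn S v - G.divOf _ v)
  have hsum : 2 * ∑ v ∈ W, (D (.inl v) : ℚ) =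
      ∑ v ∈ W, ((G.K v : ℚ) + G.degIn S v - G.divOf (G.reducedFlow S φ) v) := by
    rw [Finset.mul_sum]
    exact Finset.sum_congr rfl fun v _ => hv v
  simp only [Finset.sum_sub_distrib, Finset.sum_add_distrib] at hsum
  simp only [betaPoly, canPol, Finset.sum_add_distrib, ← Finset.sum_div]
  push_cast
  linarith

section HalfEdges

variable (e : {e // e ∉ S}) (x : {e // e ∈ S}) (d : Bool)

@[simp] lemma osrc_subdiv_inl : (G.subdiv S).osrc (.inl e, d) = .inl (G.osrc (e, d)) := by
  cases d <;> rfl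
@[simp] lemma otgt_subdiv_inl : (G.subdiv S).otgt (.inl e, d) = .inl (G.otgt (e, d)) := by
  cases d <;> rfl
@[simp] lemma osrc_subdiv_first : (G.subdiv S).osrc (.inr (x, !d), d) = .inl (G.osrc (x, d)) := by
  cases d <;> rfl
@[simp] lemma otgt_subdiv_first : (G.subdiv S).otgt (.inr (x, !d), d) = .inr x := by
  cases d <;> rfl
@[simp] lemma osrc_subdiv_second : (G.subdiv S).osrc (.inr (x, d), d) = .inr x := by
  cases d <;> rfl
@[simp] lemma otgt_subdiv_second : (G.subdiv S).otgt (.inr (x, d), d) = .inl (G.otgt (x, d)) := by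
  cases d <;> rfl

lemma flowVal_subdiv_inl :
    (G.subdiv S).flowVal φ (.inl e, d) = G.flowVal (G.reducedFlow S φ) (e, d) := by
  cases d <;> simp [flowVal]

variable {d} in
lemma flowVal_subdiv_first (hb : φ (.inr (x, false)) - φ (.inr (x, true)) = 2) :
    (G.subdiv S).flowVal φ (.inr (x, !d), d) = G.flowVal (G.reducedFlow S φ) (x, d) + 1 := by
  cases d
  · simp only [flowVal, Bool.not_false, if_false, reducedFlow_of_mem, Bool.false_eq_true]
    omega
  · simp only [flowVal, Bool.not_true, if_true, reducedFlow_of_mem]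
    omega

lemma flowVal_subdiv_second (hb : φ (.inr (x, false)) - φ (.inr (x, true)) = 2) :
    (G.subdiv S).flowVal φ (.inr (x, d), d) = G.flowVal (G.reducedFlow S φ) (x, d) - 1 := by
  cases d <;> simp only [flowVal, if_true, if_false, reducedFlow_of_mem, Bool.false_eq_true]
  all_goals omega

end HalfEdges

lemma phiReach_of_le_flowVal
    (hb : ∀ x : {e // e ∈ S}, φ (.inr (x, false)) - φ (.inr (x, true)) = 2)
    {e : G.E} {d : Bool}
    (h : (if e ∈ S then 1 else 0) ≤ G.flowVal (G.reducedFlow S φ) (e, d)) :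
    (G.subdiv S).PhiReach φ ∅ (.inl (G.osrc (e, d))) (.inl (G.otgt (e, d))) := by
  by_cases he : e ∈ S
  · rw [if_pos he] at h
    have h1 := phiReach_of_flowVal_nonneg (H := G.subdiv S) (o := (Sum.inr (⟨e, he⟩, !d), d))
      (by rw [flowVal_subdiv_first _ (hb _)]; dsimp only; omega)
    have h2 := phiReach_of_flowVal_nonneg (H := G.subdiv S) (o := (Sum.inr (⟨e, he⟩, d), d))
      (by rw [flowVal_subdiv_second _ _ (hb _)]; dsimp only; omega)
    simp only [osrc_subdiv_first, otgt_subdiv_first, osrc_subdiv_second, otgt_subdiv_second]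
      at h1 h2
    exact h1.trans h2
  · rw [if_neg he] at h
    simpa using phiReach_of_flowVal_nonneg (H := G.subdiv S) (o := (Sum.inl ⟨e, he⟩, d))
      (by rwa [flowVal_subdiv_inl])

lemma exists_flowVal_pos_of_flowVal_pos
    (hb : ∀ x : {e // e ∈ S}, φ (.inr (x, false)) - φ (.inr (x, true)) = 2)
    {e : G.E} {d : Bool}
    (h : 0 < G.flowVal (G.reducedFlow S φ) (e, d)) :
    ∃ o, 0 < (G.subdiv S).flowVal φ o ∧ (G.subdiv S).osrc o = .inl (G.osrc (e, d)) ∧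
      (G.subdiv S).PhiReach φ ∅ ((G.subdiv S).otgt o) (.inl (G.otgt (e, d))) := by
  by_cases he : e ∈ S
  · refine ⟨(Sum.inr (⟨e, he⟩, !d), d), ?_, by simp, ?_⟩
    · rw [flowVal_subdiv_first _ (hb _)]
      dsimp only
      omega
    simpa using phiReach_of_flowVal_nonneg (H := G.subdiv S) (o := (Sum.inr (⟨e, he⟩, d), d))
      (by rw [flowVal_subdiv_second _ _ (hb _)]; dsimp only; omega)
  · exact ⟨(Sum.inl ⟨e, he⟩, d), by rwa [flowVal_subdiv_inl], by simp,
      by simpa using .refl⟩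

lemma indicator_le_netInflow
    (hb : ∀ x : {e // e ∈ S}, φ (.inr (x, false)) - φ (.inr (x, true)) = 2) {W : Finset G.V}
    (hW : ∀ a ∈ W, ∀ b, (G.subdiv S).PhiReach φ ∅ (.inl a) (.inl b) → b ∈ W)
    (e : G.E) :
    (if e ∉ S ∧ G.crossing W e then 1 else 0 : ℤ) ≤ G.reducedFlow S φ e *
      ((if G.tgt e ∈ W then 1 else 0) - (if G.src e ∈ W then 1 else 0)) := by
  have hout : ∀ d, G.osrc (e, d) ∈ W → G.otgt (e, d) ∉ W →
      G.flowVal (G.reducedFlow S φ) (e, d) < if e ∈ S then 1 else 0 :=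
    fun d hin hout => not_le.1 fun h => hout (hW _ hin _ (phiReach_of_le_flowVal hb h))
  by_cases hs : G.src e ∈ W <;> by_cases ht : G.tgt e ∈ W
  · simp [crossing, hs, ht]
  · have := hout true hs ht
    have hcr : G.crossing W e := by simp [crossing, hs, ht]
    simp only [flowVal_true, hs, ht, hcr, and_true, if_true, if_false] at this ⊢
    split_ifs at this ⊢ <;> omega
  · have := hout false ht hs
    have hcr : G.crossing W e := by simp [crossing, hs, ht]
    simp only [flowVal_false, hs, ht, hcr, and_true, if_true, if_false] at this ⊢
    split_ifs at this ⊢ <;> omega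
  · simp [crossing, hs, ht]

lemma reducedFlow_eq_zero_of_crossing (hD : G.IsPseudoDivisor S D)
    (hφ : (G.subdiv S).IsRootFlow D φ) (hps : G.IsPolystable S D) {W : Finset G.V}
    (hW : ∀ a ∈ W, ∀ b, (G.subdiv S).PhiReach φ ∅ (.inl a) (.inl b) → b ∈ W) {e : G.E}
    (he : G.crossing W e) : G.reducedFlow S φ e = 0 := by
  set ind : G.E → ℤ := fun e => if e ∉ S ∧ G.crossing W e then 1 else 0
  set net : G.E → ℤ := fun e => G.reducedFlow S φ e *
    ((if G.tgt e ∈ W then 1 else 0) - (if G.src e ∈ W then 1 else 0))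
  have hle : ∀ e ∈ Finset.univ, ind e ≤ net e :=
    fun e _ => indicator_le_netInflow (hφ.sub_eq_two hD) hW e
  have hβ : 2 * G.betaPoly S D W = ((∑ e, ind e - ∑ e, net e : ℤ) : ℚ) := by
    rw [two_mul_betaPoly hD hφ, sum_divOf, Finset.card_filter]
    congr 1
    push_cast
    rfl
  have hsum : ∑ e, ind e = ∑ e, net e := by
    refine le_antisymm (Finset.sum_le_sum hle) ?_
    have h0 : (0 : ℚ) ≤ ((∑ e, ind e - ∑ e, net e : ℤ) : ℚ) := by linarith [(hps W).1]
    exact sub_nonneg.1 (Int.cast_nonneg_iff.1 h0)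
  have hnet := (Finset.sum_eq_sum_iff_of_le hle).1 hsum e (Finset.mem_univ e)
  have hind : ind e = 0 := by
    refine if_neg fun hcross => ?_
    have := (hps W).2 ⟨e, hcross⟩
    rw [← mul_lt_mul_iff_of_pos_left two_pos, mul_zero, hβ, hsum, sub_self,
      Int.cast_zero] at this
    exact this.false
  unfold crossing at he
  by_cases hs : G.src e ∈ W <;> simp_all [net]

theorem reducedFlow_eq_zero (hD : G.IsPseudoDivisor S D) (hac : (G.subdiv S).Acyclic φ)
    (hφ : (G.subdiv S).IsRootFlow D φ) (hps : G.IsPolystable S D) (e : G.E) :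
    G.reducedFlow S φ e = 0 := by
  by_contra hne
  obtain ⟨d, hd⟩ : ∃ d, 0 < G.flowVal (G.reducedFlow S φ) (e, d) := by
    rcases lt_or_gt_of_ne hne with h | h
    · exact ⟨false, by simpa using h⟩
    · exact ⟨true, by simpa using h⟩
  obtain ⟨o, hpos, hsrc, hreach⟩ := exists_flowVal_pos_of_flowVal_pos (hφ.sub_eq_two hD) hd
  set W := Finset.univ.filter fun y => (G.subdiv S).PhiReach φ ∅ (.inl (G.otgt (e, d))) (.inl y)
  have hW : ∀ a ∈ W, ∀ b, (G.subdiv S).PhiReach φ ∅ (.inl a) (.inl b) → b ∈ W := by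
    simp only [W, Finset.mem_filter, Finset.mem_univ, true_and]
    exact fun a ha b hab => ha.trans hab
  have hin : G.otgt (e, d) ∈ W := Finset.mem_filter.2 ⟨Finset.mem_univ _, .refl⟩
  have hback : G.osrc (e, d) ∈ W := by
    by_contra hout
    refine hne (reducedFlow_eq_zero_of_crossing hD hφ hps hW ?_)
    cases d <;> simp_all [crossing]
  have hcycle := (Finset.mem_filter.1 hback).2
  rw [← hsrc] at hcycle
  exact hac.not_phiReach hpos (hreach.trans hcycle)

theorem isCyclicSubgraph_and_eq_DP {P : Finset G.E} {D : (G.subdiv Pᶜ).V → ℤ}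
    (hroot : G.IsPseudoRoot Pᶜ D) (hps : G.IsPolystable Pᶜ D) :
    G.IsCyclicSubgraph P ∧ D = G.DP P := by
  obtain ⟨hD, φ, hac, hφ⟩ := hroot
  have hv : ∀ v, 2 * D (.inl v) + G.degIn P v = 2 * ((G.deg v : ℤ) - 1 + G.w v) := by
    intro v
    have := hφ (.inl v)
    rw [divOf_subdiv_inl G (IsRootFlow.sub_eq_two hD hφ), K_subdiv_inl] at this
    simp only [divOf, reducedFlow_eq_zero hD hac hφ hps, ite_self, Finset.sum_const_zero,
      sub_self, zero_sub] at this
    have := G.degIn_add_degIn_compl P v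
    unfold K at *
    omega
  refine ⟨fun v => Nat.even_iff.2 (by have := hv v; omega), funext ?_⟩
  rintro (v | x)
  · have := hv v
    simp only [DP]
    omega
  · exact hD x

lemma exists_eq_DP (hroot : G.IsPseudoRoot S D) (hps : G.IsPolystable S D) :
    ∃ P, G.IsCyclicSubgraph P ∧
      (⟨S, D⟩ : Σ S : Finset G.E, ((G.subdiv S).V → ℤ)) = ⟨Pᶜ, G.DP P⟩ := by
  obtain ⟨P, rfl⟩ : ∃ P, S = Pᶜ := ⟨Sᶜ, (compl_compl S).symm⟩
  obtain ⟨hP, rfl⟩ := isCyclicSubgraph_and_eq_DP hroot hps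
  exact ⟨P, hP, rfl⟩

end PseudoRoot

section CyclicSubgraph

variable {G}

def inwardFlow (S : Finset G.E) : (G.subdiv S).E → ℤ
  | .inl _ => 0
  | .inr (_, b) => if b then -1 else 1

lemma inwardFlow_sub_eq_two (S : Finset G.E) (x : {e // e ∈ S}) :
    G.inwardFlow S (.inr (x, false)) - G.inwardFlow S (.inr (x, true)) = 2 := rfl

lemma reducedFlow_inwardFlow (S : Finset G.E) : G.reducedFlow S (G.inwardFlow S) = 0 := by
  funext e
  by_cases he : e ∈ S <;> simp [reducedFlow, he, inwardFlow]

-- Positive flow only enters exceptional vertices, and every half-edge leaving one carries `-1`.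
lemma acyclic_inwardFlow (S : Finset G.E) : (G.subdiv S).Acyclic (G.inwardFlow S) := by
  refine acyclic_of_flowVal_neg fun o o' hpos hsrc => ?_
  rcases o with ⟨e | ⟨x, _ | _⟩, _ | _⟩ <;> rcases o' with ⟨e' | ⟨x', _ | _⟩, _ | _⟩ <;>
    simp_all [inwardFlow, flowVal, osrc, otgt]

lemma isRootFlow_DP {P : Finset G.E} (hP : G.IsCyclicSubgraph P) :
    (G.subdiv Pᶜ).IsRootFlow (G.DP P) (G.inwardFlow Pᶜ) := by
  rintro (v | x)
  · rw [divOf_subdiv_inl G (inwardFlow_sub_eq_two Pᶜ), reducedFlow_inwardFlow, K_subdiv_inl]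
    have := hP v
    have := G.degIn_add_degIn_compl P v
    rw [Nat.even_iff] at *
    simp only [DP, divOf, K, Pi.zero_apply, ite_self, Finset.sum_const_zero]
    omega
  · rw [divOf_subdiv_inr, K_subdiv_inr]
    rfl

lemma isPseudoRoot_DP {P : Finset G.E} (hP : G.IsCyclicSubgraph P) :
    G.IsPseudoRoot Pᶜ (G.DP P) :=
  ⟨fun _ => rfl, _, acyclic_inwardFlow Pᶜ, isRootFlow_DP hP⟩

lemma isPolystable_DP {P : Finset G.E} (hP : G.IsCyclicSubgraph P) :
    G.IsPolystable Pᶜ (G.DP P) := by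
  intro W
  have h := two_mul_betaPoly (fun _ => rfl) (isRootFlow_DP hP) W
  simp only [reducedFlow_inwardFlow, divOf, Pi.zero_apply, ite_self, Finset.sum_const_zero,
    sub_zero, Int.cast_natCast] at h
  rw [show G.betaPoly Pᶜ (G.DP P) W =
    ((Finset.univ.filter fun e => e ∉ Pᶜ ∧ G.crossing W e).card : ℚ) / 2 by linarith]
  refine ⟨by positivity, fun ⟨e, he⟩ => div_pos (Nat.cast_pos.2 (Finset.card_pos.2 ?_)) two_pos⟩
  exact ⟨e, Finset.mem_filter.2 ⟨Finset.mem_univ e, he⟩⟩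

end CyclicSubgraph

section Counting

open Matrix

def finsetEquivZModTwo (α : Type*) [Fintype α] [DecidableEq α] :
    Finset α ≃ (α → ZMod 2) where
  toFun P a := if a ∈ P then 1 else 0
  invFun f := Finset.univ.filter (f · = 1)
  left_inv P := by ext; simp
  right_inv f := by
    funext a
    have : ∀ x : ZMod 2, x = 0 ∨ x = 1 := by decide
    rcases this (f a) with h | h <;> simp [h]

def incidence : Matrix G.V G.E (ZMod 2) :=
  fun v e => (if G.src e = v then 1 else 0) + (if G.tgt e = v then 1 else 0)

lemma incidence_mulVec_finsetEquivZModTwo (P : Finset G.E) (v : G.V) :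
    (G.incidence *ᵥ finsetEquivZModTwo G.E P) v = G.degIn P v := by
  simp [Matrix.mulVec, dotProduct, incidence, finsetEquivZModTwo, degIn, Finset.sum_add_distrib,
    Finset.sum_boole]

lemma isCyclicSubgraph_iff_mulVec_eq_zero (P : Finset G.E) :
    G.IsCyclicSubgraph P ↔ G.incidence *ᵥ finsetEquivZModTwo G.E P = 0 := by
  simp only [IsCyclicSubgraph, funext_iff, incidence_mulVec_finsetEquivZModTwo, Pi.zero_apply,
    ZMod.natCast_eq_zero_iff_even]

lemma incidence_mulVec_single (e : G.E) :
    G.incidence *ᵥ Pi.single e 1 = Pi.single (G.src e) 1 + Pi.single (G.tgt e) 1 := by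
  rw [Matrix.mulVec_single_one]
  ext v
  simp [incidence, Pi.single_apply, eq_comm]

lemma sum_incidence (e : G.E) : ∑ v, G.incidence v e = 0 := by
  simp [incidence, Finset.sum_add_distrib, ZModModule.add_self]

def augmentation : (G.V → ZMod 2) →ₗ[ZMod 2] ZMod 2 where
  toFun g := ∑ v, g v
  map_add' _ _ := Finset.sum_add_distrib
  map_smul' _ _ := (Finset.mul_sum _ _ _).symm

lemma single_add_single_mem_range {u u' : G.V} (h : G.ReachVia Finset.univ u u') :
    Pi.single u 1 + Pi.single u' 1 ∈ LinearMap.range (G.incidence.mulVecLin) := by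
  induction h with
  | refl => rw [ZModModule.add_self]; exact zero_mem _
  | @tail b c _ hadj ih =>
    obtain ⟨e, -, he⟩ := hadj
    have hedge : Pi.single b 1 + Pi.single c 1 ∈ LinearMap.range (G.incidence.mulVecLin) := by
      refine ⟨Pi.single e 1, ?_⟩
      rcases he with ⟨rfl, rfl⟩ | ⟨rfl, rfl⟩
      · exact G.incidence_mulVec_single e
      · exact (G.incidence_mulVec_single e).trans (add_comm _ _)
    simpa only [ZModModule.add_add_add_cancel] using add_mem ih hedge

lemma range_mulVecLin_incidence (hconn : G.Connected) :
    LinearMap.range (G.incidence.mulVecLin) = LinearMap.ker G.augmentation := by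
  apply le_antisymm
  · rintro g ⟨f, rfl⟩
    show ∑ v, ∑ e, G.incidence v e * f e = 0
    rw [Finset.sum_comm]
    refine Finset.sum_eq_zero fun e _ => ?_
    rw [← Finset.sum_mul, sum_incidence, zero_mul]
  · intro g hg
    obtain ⟨v₀⟩ := hconn.1
    have hg : ∑ u, g u = 0 := hg
    have hdecomp : g = ∑ u, g u • (Pi.single u 1 + Pi.single v₀ 1) := by
      simp only [smul_add, Finset.sum_add_distrib, ← Finset.sum_smul, hg, zero_smul, add_zero]
      ext v
      simp [Finset.sum_apply, Pi.single_apply]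
    rw [hdecomp]
    exact Submodule.sum_mem _ fun u _ =>
      Submodule.smul_mem _ _ (G.single_add_single_mem_range (hconn.2 u v₀))

lemma finrank_ker_mulVecLin_incidence (hconn : G.Connected) :
    Module.finrank (ZMod 2) (LinearMap.ker G.incidence.mulVecLin) =
      Fintype.card G.E + 1 - Fintype.card G.V := by
  have hrange := LinearMap.finrank_range_add_finrank_ker G.incidence.mulVecLin
  have haug := LinearMap.finrank_range_add_finrank_ker G.augmentation
  obtain ⟨v₀⟩ := hconn.1
  have hsurj : LinearMap.range G.augmentation = ⊤ :=
    LinearMap.range_eq_top.2 fun c => ⟨Pi.single v₀ c, by simp [augmentation]⟩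
  rw [hsurj, finrank_top, Module.finrank_self] at haug
  rw [G.range_mulVecLin_incidence hconn] at hrange
  simp only [Module.finrank_pi] at hrange haug
  omega

lemma card_cyclicSubgraph (hconn : G.Connected) :
    Nat.card {P : Finset G.E // G.IsCyclicSubgraph P} =
      2 ^ (Fintype.card G.E + 1 - Fintype.card G.V) := by
  have e : {P : Finset G.E // G.IsCyclicSubgraph P} ≃ LinearMap.ker G.incidence.mulVecLin :=
    (finsetEquivZModTwo G.E).subtypeEquiv fun P => by
      rw [LinearMap.mem_ker, Matrix.mulVecLin_apply, isCyclicSubgraph_iff_mulVec_eq_zero]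
  rw [Nat.card_congr e, Nat.card_eq_fintype_card, Module.card_eq_pow_finrank (K := ZMod 2),
    ZMod.card, G.finrank_ker_mulVecLin_incidence hconn]

end Counting

end WGraph

/-- On a connected weighted graph `Γ`, for every cyclic
subgraph `P` the pair `(E_P, D_P)` (with `E_P = Pᶜ`) is a polystable
pseudo-root; conversely every polystable pseudo-root is of this form for a
unique cyclic subgraph `P`. In particular there are exactly
`2^{b₁(Γ)} = 2^{#E - #V + 1}` polystable pseudo-roots. -/
theorem stmt6 (G : WGraph) (hconn : G.Connected) :
    (∀ P : Finset G.E, G.IsCyclicSubgraph P →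
        G.IsPseudoRoot Pᶜ (G.DP P) ∧ G.IsPolystable Pᶜ (G.DP P)) ∧
    (∀ (S : Finset G.E) (D : (G.subdiv S).V → ℤ),
        G.IsPseudoRoot S D → G.IsPolystable S D →
          ∃! P : Finset G.E, G.IsCyclicSubgraph P ∧
            (⟨S, D⟩ : Σ S : Finset G.E, ((G.subdiv S).V → ℤ)) = ⟨Pᶜ, G.DP P⟩) ∧
    Nat.card {p : Σ S : Finset G.E, ((G.subdiv S).V → ℤ) //
        G.IsPseudoRoot p.1 p.2 ∧ G.IsPolystable p.1 p.2} =
      2 ^ (Fintype.card G.E + 1 - Fintype.card G.V) := by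
  open WGraph in
  refine ⟨fun P hP => ⟨isPseudoRoot_DP hP, isPolystable_DP hP⟩, fun S D hroot hps => ?_, ?_⟩
  · obtain ⟨P, hP, hSD⟩ := exists_eq_DP hroot hps
    refine ⟨P, ⟨hP, hSD⟩, fun Q ⟨_, hQ⟩ => compl_injective ?_⟩
    exact (congrArg Sigma.fst hQ).symm.trans (congrArg Sigma.fst hSD)
  · rw [← G.card_cyclicSubgraph hconn]
    refine (Nat.card_eq_of_bijective (fun P => ⟨⟨P.1ᶜ, G.DP P.1⟩,
      isPseudoRoot_DP P.2, isPolystable_DP P.2⟩) ⟨fun P Q h => ?_, ?_⟩).symm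
    · exact Subtype.ext (compl_injective (congrArg (fun p => p.1.1) h))
    · rintro ⟨⟨S, D⟩, hroot, hps⟩
      obtain ⟨P, hP, h⟩ := exists_eq_DP hroot hps
      exact ⟨⟨P, hP⟩, Subtype.ext h.symm⟩
end
end

section
/- Let ι: Γ → Γ' be a specialization of weighted graphs (edge contraction) and P a cyclic subgraph of Γ. Then ι_*(E_P, D_P) = (E_{ι_*(P)}, D_{ι_*(P)}), i.e., pushforward of the polystable pseudo-root associated to P is the polystable pseudo-root associated to the image cyclic subgraph ι_*(P). -/
/-! A common framework for weighted multigraphs, divisors, flows,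
subdivisions, pseudo-divisors and specializations, following
"The moduli space of quasistable spin curves". -/

noncomputable section

namespace WGraph

attribute [local instance] Classical.propDecidable

variable (G : WGraph)

end WGraph

attribute [local instance] Classical.propDecidable

/-!
Over an exceptional vertex of `Γ'^{E'}` both sides are `-1`. Over an original vertex `v'`
the pushforward sums `D_P` over the fibre of `v'` and adds `-1` for each contracted edge of
`E_P` lying over `v'`. Writing `c`, `c_P`, `c_{E_P}` for the numbers of contracted edges
(of `Γ`, `P`, `E_P`) lying over `v'`, summing over the fibre gives `deg + 2c` for the degree,
`deg_{ι_*P}/2 + c_P` for half the `P`-degree (every `P`-degree is even), and the weight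
formula of a contraction gives `w' = ∑ w + c - #fibre + 1`; since `c = c_P + c_{E_P}`, all
correction terms cancel.
-/

namespace WGraph

lemma isPseudoDivisor_DP (G : WGraph) (P : Finset G.E) : G.IsPseudoDivisor Pᶜ (G.DP P) :=
  fun _ => rfl

namespace Spec

variable {G G' : WGraph} (σ : Spec G G') {S : Finset G.E} {S' : Finset G'.E}

/-- The image `ι_*(A)` of an edge set: the edges of `A` that survive the contraction. -/
def pushEdges (A : Finset G.E) : Finset G'.E := Finset.univ.filter (fun e' => σ.emap e' ∈ A)

def fiber (v' : G'.V) : Finset G.V := Finset.univ.filter (fun v => σ.vmap v = v')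

def contractedAt (A : Finset G.E) (v' : G'.V) : Finset G.E :=
  A.filter (fun e => e ∉ Finset.univ.image σ.emap ∧ σ.vmap (G.src e) = v')

lemma compl_pushEdges (A : Finset G.E) : (σ.pushEdges A)ᶜ = σ.pushEdges Aᶜ := by
  ext; simp [pushEdges]

lemma pushEdges_univ : σ.pushEdges Finset.univ = Finset.univ := by
  ext; simp [pushEdges]

lemma card_contractedAt_add_card_contractedAt_compl (A : Finset G.E) (v' : G'.V) :
    (σ.contractedAt A v').card + (σ.contractedAt Aᶜ v').card =
      (σ.contractedAt Finset.univ v').card := by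
  rw [contractedAt, contractedAt, ← Finset.card_union_of_disjoint
    (Finset.disjoint_filter_filter disjoint_compl_right), ← Finset.filter_union,
    Finset.union_compl]
  rfl

lemma sum_fiber_card_filter_eq (A : Finset G.E) (v' : G'.V) (g : G.E → G.V) :
    ∑ v ∈ σ.fiber v', (A.filter (fun e => g e = v)).card =
      (A.filter (fun e => σ.vmap (g e) = v')).card := by
  rw [Finset.card_eq_sum_card_fiberwise (f := g) (t := σ.fiber v')
    (fun e he => by simp_all [fiber])]
  refine Finset.sum_congr rfl fun v hv => ?_
  rw [Finset.filter_filter]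
  refine congrArg _ (Finset.filter_congr fun e _ => ?_)
  simp only [fiber, Finset.mem_filter, Finset.mem_univ, true_and] at hv
  exact ⟨fun h => ⟨h.symm ▸ hv, h⟩, And.right⟩

lemma card_pushEdges_filter (A : Finset G.E) (v' : G'.V) (g : G.E → G.V) (g' : G'.E → G'.V)
    (hg : ∀ e', σ.vmap (g (σ.emap e')) = g' e') :
    ((σ.pushEdges A).filter (fun e' => g' e' = v')).card =
      (A.filter (fun e => e ∈ Finset.univ.image σ.emap ∧ σ.vmap (g e) = v')).card := by
  rw [← Finset.card_image_of_injective _ σ.emap_inj]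
  congr 1
  ext e
  simp only [pushEdges, Finset.mem_image, Finset.mem_filter, Finset.mem_univ, true_and]
  constructor
  · rintro ⟨e', ⟨he'A, rfl⟩, rfl⟩
    exact ⟨he'A, ⟨e', rfl⟩, hg e'⟩
  · rintro ⟨heA, ⟨e', rfl⟩, hv⟩
    exact ⟨e', ⟨heA, (hg e').symm.trans hv⟩, rfl⟩

lemma sum_fiber_card_filter (A : Finset G.E) (v' : G'.V) (g : G.E → G.V) (g' : G'.E → G'.V)
    (hg : ∀ e', σ.vmap (g (σ.emap e')) = g' e') :
    ∑ v ∈ σ.fiber v', (A.filter (fun e => g e = v)).card =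
      ((σ.pushEdges A).filter (fun e' => g' e' = v')).card +
        (A.filter (fun e => e ∉ Finset.univ.image σ.emap ∧ σ.vmap (g e) = v')).card := by
  rw [σ.sum_fiber_card_filter_eq, σ.card_pushEdges_filter A v' g g' hg,
    ← Finset.card_union_of_disjoint, ← Finset.filter_or]
  · congr 1
    exact Finset.filter_congr fun e _ => by tauto
  · exact Finset.disjoint_filter.2 fun e _ h h' => h'.1 h.1

lemma sum_fiber_degIn (A : Finset G.E) (v' : G'.V) :
    ∑ v ∈ σ.fiber v', G.degIn A v =
      G'.degIn (σ.pushEdges A) v' + 2 * (σ.contractedAt A v').card := by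
  have hsrc := σ.sum_fiber_card_filter A v' G.src G'.src σ.src_comm
  have htgt := σ.sum_fiber_card_filter A v' G.tgt G'.tgt σ.tgt_comm
  have hcontr : A.filter (fun e => e ∉ Finset.univ.image σ.emap ∧ σ.vmap (G.tgt e) = v') =
      σ.contractedAt A v' :=
    Finset.filter_congr fun e _ => and_congr_right fun he => by rw [σ.contract_eq e he]
  rw [hcontr] at htgt
  simp only [degIn, Finset.sum_add_distrib, hsrc, htgt, contractedAt]
  ring

lemma sum_fiber_deg (v' : G'.V) :
    ∑ v ∈ σ.fiber v', G.deg v = G'.deg v' + 2 * (σ.contractedAt Finset.univ v').card := by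
  have h := σ.sum_fiber_degIn Finset.univ v'
  rwa [pushEdges_univ] at h

lemma subdivVmap_inr (e : {e // e ∈ S}) :
    σ.subdivVmap S S' (.inr e) =
      if h : ∃ e' : {e' // e' ∈ S'}, σ.emap e'.1 = e.1 then (.inr h.choose : (G'.subdiv S').V)
      else .inl (σ.vmap (G.src e.1)) :=
  rfl

lemma subdivVmap_inr_eq_inr_iff (e : {e // e ∈ S}) (x' : {e' // e' ∈ S'}) :
    σ.subdivVmap S S' (.inr e) = .inr x' ↔ e.1 = σ.emap x'.1 := by
  rw [subdivVmap_inr]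
  by_cases h : ∃ e' : {e' // e' ∈ S'}, σ.emap e'.1 = e.1
  · rw [dif_pos h]
    refine Sum.inr_injective.eq_iff.trans ?_
    exact ⟨fun hx => hx ▸ h.choose_spec.symm,
      fun hx => Subtype.ext (σ.emap_inj (h.choose_spec.trans hx))⟩
  · rw [dif_neg h]
    exact ⟨Sum.inl_ne_inr.elim, fun hx => (h ⟨x', hx.symm⟩).elim⟩

lemma subdivVmap_inr_eq_inl_iff (hS : ∀ e', e' ∈ S' ↔ σ.emap e' ∈ S)
    (e : {e // e ∈ S}) (v' : G'.V) :
    σ.subdivVmap S S' (.inr e) = .inl v' ↔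
      e.1 ∉ Finset.univ.image σ.emap ∧ σ.vmap (G.src e.1) = v' := by
  have hsurv : (∃ e' : {e' // e' ∈ S'}, σ.emap e'.1 = e.1) ↔ e.1 ∈ Finset.univ.image σ.emap :=
    ⟨fun ⟨e', he'⟩ => Finset.mem_image.2 ⟨e', Finset.mem_univ _, he'⟩,
      fun he => by
        obtain ⟨e', -, he'⟩ := Finset.mem_image.1 he
        exact ⟨⟨e', (hS e').2 (he' ▸ e.2)⟩, he'⟩⟩
  rw [subdivVmap_inr]
  by_cases h : ∃ e' : {e' // e' ∈ S'}, σ.emap e'.1 = e.1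
  · rw [dif_pos h]
    exact ⟨Sum.inr_ne_inl.elim, fun hx => (hx.1 (hsurv.1 h)).elim⟩
  · rw [dif_neg h]
    refine Sum.inl_injective.eq_iff.trans ?_
    exact ⟨fun hx => ⟨mt hsurv.2 h, hx⟩, And.right⟩

lemma pushSubdivDiv_eq_sum_ite (D : (G.subdiv S).V → ℤ) (y : (G'.subdiv S').V) :
    σ.pushSubdivDiv S S' D y = ∑ x, if σ.subdivVmap S S' x = y then D x else 0 :=
  Finset.sum_filter _ _

lemma pushSubdivDiv_inr (hS : ∀ e', e' ∈ S' ↔ σ.emap e' ∈ S) (D : (G.subdiv S).V → ℤ)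
    (x' : {e' // e' ∈ S'}) :
    σ.pushSubdivDiv S S' D (.inr x') = D (.inr ⟨σ.emap x', (hS x').1 x'.2⟩) := by
  refine (σ.pushSubdivDiv_eq_sum_ite D _).trans ?_
  rw [Fintype.sum_eq_single (.inr ⟨σ.emap x', (hS x').1 x'.2⟩)]
  · exact if_pos ((σ.subdivVmap_inr_eq_inr_iff _ x').2 rfl)
  · rintro (v | e) hne
    · exact if_neg Sum.inl_ne_inr
    · refine if_neg fun h => hne ?_
      exact congrArg Sum.inr (Subtype.ext ((σ.subdivVmap_inr_eq_inr_iff e x').1 h))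

lemma pushSubdivDiv_inl (hS : ∀ e', e' ∈ S' ↔ σ.emap e' ∈ S) {D : (G.subdiv S).V → ℤ}
    (hD : G.IsPseudoDivisor S D) (v' : G'.V) :
    σ.pushSubdivDiv S S' D (.inl v') =
      ∑ v ∈ σ.fiber v', D (.inl v) - (σ.contractedAt S v').card := by
  have horig : (∑ v : G.V, if σ.subdivVmap S S' (.inl v) = .inl v' then D (.inl v) else 0) =
      ∑ v ∈ σ.fiber v', D (.inl v) := by
    rw [fiber, Finset.sum_filter]
    exact Finset.sum_congr rfl fun v _ => if_congr Sum.inl_injective.eq_iff rfl rfl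
  have hexc : (∑ e : {e // e ∈ S}, if σ.subdivVmap S S' (.inr e) = .inl v' then D (.inr e) else 0)
      = -(σ.contractedAt S v').card := by
    rw [Finset.sum_congr rfl fun e _ => if_congr (σ.subdivVmap_inr_eq_inl_iff hS e v') (hD e) rfl,
      Finset.sum_coe_sort S (fun e => if e ∉ Finset.univ.image σ.emap ∧ σ.vmap (G.src e) = v'
        then (-1 : ℤ) else 0), ← Finset.sum_filter]
    simp [contractedAt]
  refine ((σ.pushSubdivDiv_eq_sum_ite D _).trans (Fintype.sum_sum_type _)).trans ?_
  rw [sub_eq_add_neg]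
  -- the goal decides equality on `(G'.subdiv S').V` with `decV`, `horig` classically
  convert congrArg₂ (· + ·) horig hexc

lemma sum_fiber_half_degIn {P : Finset G.E} (hP : G.IsCyclicSubgraph P) (v' : G'.V) :
    ∑ v ∈ σ.fiber v', (G.degIn P v : ℤ) / 2 =
      (G'.degIn (σ.pushEdges P) v' : ℤ) / 2 + (σ.contractedAt P v').card := by
  have htwice : 2 * ∑ v ∈ σ.fiber v', (G.degIn P v : ℤ) / 2 =
      ∑ v ∈ σ.fiber v', (G.degIn P v : ℤ) := by
    rw [Finset.mul_sum]
    exact Finset.sum_congr rfl fun v _ => Int.two_mul_ediv_two_of_even (by exact_mod_cast hP v)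
  have hsum : ∑ v ∈ σ.fiber v', (G.degIn P v : ℤ) =
      G'.degIn (σ.pushEdges P) v' + 2 * (σ.contractedAt P v').card := by
    exact_mod_cast σ.sum_fiber_degIn P v'
  omega

lemma sum_fiber_DP_sub_card_contractedAt {P : Finset G.E} (hP : G.IsCyclicSubgraph P)
    (v' : G'.V) :
    ∑ v ∈ σ.fiber v', G.DP P (.inl v) - (σ.contractedAt Pᶜ v').card =
      G'.DP (σ.pushEdges P) (.inl v') := by
  have hdeg : ∑ v ∈ σ.fiber v', (G.deg v : ℤ) =
      G'.deg v' + 2 * (σ.contractedAt Finset.univ v').card := by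
    exact_mod_cast σ.sum_fiber_deg v'
  have hw : (G'.w v' : ℤ) = ∑ v ∈ σ.fiber v', (G.w v : ℤ) +
      (σ.contractedAt Finset.univ v').card - (σ.fiber v').card + 1 :=
    σ.weight_eq v'
  have hsplit := σ.card_contractedAt_add_card_contractedAt_compl P v'
  have hhalf := σ.sum_fiber_half_degIn hP v'
  show ∑ v ∈ σ.fiber v', ((G.deg v : ℤ) - (G.degIn P v : ℤ) / 2 - 1 + G.w v) - _ =
    (G'.deg v' : ℤ) - (G'.degIn (σ.pushEdges P) v' : ℤ) / 2 - 1 + G'.w v'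
  rw [Finset.sum_add_distrib, Finset.sum_sub_distrib, Finset.sum_sub_distrib, Finset.sum_const,
    nsmul_one]
  omega

end Spec

end WGraph

/-- Pushforward along a specialization `ι : Γ → Γ'` of the
polystable pseudo-root attached to a cyclic subgraph `P` is the polystable
pseudo-root attached to `ι_*(P)`. -/
theorem stmt8 (G G' : WGraph) (σ : WGraph.Spec G G') (P : Finset G.E)
    (hcyc : G.IsCyclicSubgraph P) :
    ((Finset.univ.filter (fun e' : G'.E => σ.emap e' ∈ P))ᶜ =
      Finset.univ.filter (fun e' : G'.E => σ.emap e' ∈ Pᶜ)) ∧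
    (∀ y, σ.pushSubdivDiv Pᶜ
        (Finset.univ.filter (fun e' : G'.E => σ.emap e' ∈ P))ᶜ (G.DP P) y =
      G'.DP (Finset.univ.filter (fun e' : G'.E => σ.emap e' ∈ P)) y) := by
  have hS : ∀ e', e' ∈ (σ.pushEdges P)ᶜ ↔ σ.emap e' ∈ Pᶜ := by
    simp [WGraph.Spec.pushEdges]
  refine ⟨σ.compl_pushEdges P, ?_⟩
  rintro (v' | x')
  · exact (σ.pushSubdivDiv_inl hS (G.isPseudoDivisor_DP P) v').trans
      (σ.sum_fiber_DP_sub_card_contractedAt hcyc v')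
  · exact σ.pushSubdivDiv_inr hS _ x'
end
end

section
/- Let (Γ, E, D) be a polystable root-graph (canonical polarization of degree g-1). Then the linear map δ_E: ℝ^{E(Γ)} → ℝ^{E(Γ^E)} given by (x_e) ↦ (x_{e'}) with x_{e'} = x_e whenever e' lies over e, composed with the quotient map T_E: ℝ^{E(Γ^E)} → ℝ^{E(Γ^E)}/L_E, gives an isomorphism from the cone ℝ^{E(Γ)}_{≥0} onto the cone κ_{(Γ,E,D)} = T_E(λ_{(Γ,E,D)}), where λ_{(Γ,E,D)} = ℝ^{E(Γ^E)}_{≥0} ∩ Λ_{(Γ,E,D)} and Λ_{(Γ,E,D)} is the linear subspace cut out by the equations Σ_{e∈γ} φ_{(E,D)}(e) x_e = 0 over all oriented cycles γ of Γ^E. -/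
/-! A common framework for weighted multigraphs, divisors, flows,
subdivisions, pseudo-divisors and specializations, following
"The moduli space of quasistable spin curves". -/

noncomputable section

/-- A finite weighted multigraph (with a reference orientation of each edge). -/
structure MGraph where
  V : Type
  E : Type
  [fintV : Fintype V]
  [decV : DecidableEq V]
  [fintE : Fintype E]
  [decE : DecidableEq E]
  src : E → V
  tgt : E → V
  w : V → ℕ

namespace MGraph

attribute [instance] MGraph.fintV MGraph.decV MGraph.fintE MGraph.decE

attribute [local instance] Classical.propDecidable

variable (G : MGraph)

/-- Degree of a vertex (loops count twice). -/
def deg (v : G.V) : ℕ :=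
  (Finset.univ.filter (fun e => G.src e = v)).card +
    (Finset.univ.filter (fun e => G.tgt e = v)).card

/-- Degree of a vertex in the edge set `A` (loops count twice). -/
def degIn (A : Finset G.E) (v : G.V) : ℕ :=
  (A.filter (fun e => G.src e = v)).card + (A.filter (fun e => G.tgt e = v)).card

/-- Canonical divisor: `K(v) = 2 w(v) - 2 + deg(v)`. -/
def K (v : G.V) : ℤ := 2 * (G.w v : ℤ) - 2 + (G.deg v : ℤ)

/-- Canonical polarization of degree `g - 1`. -/
def canPol (v : G.V) : ℚ := (G.K v : ℚ) / 2

/-- Oriented edges: `(e, true)` is `src → tgt`, `(e, false)` is the reverse. -/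
abbrev OEdge := G.E × Bool

def osrc (oe : G.OEdge) : G.V := if oe.2 then G.src oe.1 else G.tgt oe.1

def otgt (oe : G.OEdge) : G.V := if oe.2 then G.tgt oe.1 else G.src oe.1

/-- A flow is recorded by its values along the reference orientation;
`flowVal` gives its value on an oriented edge. -/
def flowVal (φ : G.E → ℤ) (oe : G.OEdge) : ℤ := if oe.2 then φ oe.1 else -φ oe.1

/-- The divisor of a flow: `Div(φ)(v) = ∑_{t(e) = v} φ(e)` over oriented edges. -/
def divOf (φ : G.E → ℤ) (v : G.V) : ℤ :=
  (∑ e : G.E, if G.tgt e = v then φ e else 0) -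
    ∑ e : G.E, if G.src e = v then φ e else 0

/-- `e` has exactly one endpoint in `W`. -/
def crossing (W : Finset G.V) (e : G.E) : Prop := (G.src e ∈ W) ≠ (G.tgt e ∈ W)

/-- Number of edges between `W` and its complement. -/
def delta (W : Finset G.V) : ℕ := (Finset.univ.filter (fun e => G.crossing W e)).card

/-- `β_D(W) = deg(D|_W) - μ(W) + δ_W / 2`. -/
def beta (μ : G.V → ℚ) (D : G.V → ℤ) (W : Finset G.V) : ℚ :=
  (∑ v ∈ W, (D v : ℚ)) - (∑ v ∈ W, μ v) + (G.delta W : ℚ) / 2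

def Semistable (μ : G.V → ℚ) (D : G.V → ℤ) : Prop :=
  ∀ W : Finset G.V, W ≠ Finset.univ → 0 ≤ G.beta μ D W

def Stable (μ : G.V → ℚ) (D : G.V → ℤ) : Prop :=
  ∀ W : Finset G.V, W ≠ Finset.univ → W.Nonempty → 0 < G.beta μ D W

def Quasistable (μ : G.V → ℚ) (v₀ : G.V) (D : G.V → ℤ) : Prop :=
  ∀ W : Finset G.V, W ≠ Finset.univ →
    (0 ≤ G.beta μ D W ∧ (v₀ ∈ W → 0 < G.beta μ D W))

/-- An oriented cycle: a nonempty cyclically closed chain of oriented edges,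
with pairwise distinct underlying edges and pairwise distinct vertices. -/
def IsOrientedCycle (c : List G.OEdge) : Prop :=
  c ≠ [] ∧ (c.map Prod.fst).Nodup ∧ (c.map G.osrc).Nodup ∧
    ∀ i : Fin c.length,
      G.otgt (c.get i) = G.osrc (c.get ⟨((i : ℕ) + 1) % c.length, Nat.mod_lt _ i.pos⟩)

/-- A flow is acyclic if there is no oriented cycle on which it is
nonnegative and somewhere positive. -/
def Acyclic (φ : G.E → ℤ) : Prop :=
  ¬∃ c : List G.OEdge, G.IsOrientedCycle c ∧ (∀ oe ∈ c, 0 ≤ G.flowVal φ oe) ∧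
      ∃ oe ∈ c, 0 < G.flowVal φ oe

/-- Adjacency through an edge of `A`. -/
def adjVia (A : Finset G.E) (a b : G.V) : Prop :=
  ∃ e ∈ A, (G.src e = a ∧ G.tgt e = b) ∨ (G.src e = b ∧ G.tgt e = a)

/-- Reachability using only edges of `A`. -/
def ReachVia (A : Finset G.E) : G.V → G.V → Prop := Relation.ReflTransGen (G.adjVia A)

def Connected : Prop := Nonempty G.V ∧ ∀ u v : G.V, G.ReachVia Finset.univ u v

/-- A cyclic subgraph: a set of edges in which every vertex has even degree. -/
def IsCyclicSubgraph (P : Finset G.E) : Prop := ∀ v : G.V, Even (G.degIn P v)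

/-- The characteristic flow of a vertex. -/
def charFlow (v₀ : G.V) (e : G.E) : ℤ :=
  if G.src e = v₀ ∧ G.tgt e ≠ v₀ then 1
  else if G.tgt e = v₀ ∧ G.src e ≠ v₀ then -1 else 0

/-- `Div(v₀)`, the principal divisor attached to a vertex. -/
def DivV (v₀ : G.V) : G.V → ℤ := G.divOf (G.charFlow v₀)

/-- Principal divisors are integer combinations of the `Div(v)`. -/
def Principal (D : G.V → ℤ) : Prop :=
  ∃ a : G.V → ℤ, ∀ v, D v = ∑ u : G.V, a u * G.DivV u v

/-- Number of connected components of the subgraph with all vertices and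
edge set `A`. -/
def numComponents (A : Finset G.E) : ℕ :=
  (Finset.univ.image (fun v => Finset.univ.filter (fun u => G.ReachVia A v u))).card

/-- The subdivision `Γ^S`: one exceptional vertex inserted in each edge of `S`. -/
def subdiv (S : Finset G.E) : MGraph where
  V := G.V ⊕ {e // e ∈ S}
  E := {e // e ∉ S} ⊕ {e // e ∈ S} × Bool
  src := fun x =>
    match x with
    | .inl e => .inl (G.src e.1)
    | .inr (e, b) => if b then .inr e else .inl (G.src e.1)
  tgt := fun x =>
    match x with
    | .inl e => .inl (G.tgt e.1)
    | .inr (e, b) => if b then .inl (G.tgt e.1) else .inr e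
  w := fun v =>
    match v with
    | .inl v => G.w v
    | .inr _ => 0

/-- A pseudo-divisor: value `-1` on every exceptional vertex. -/
def IsPseudoDivisor (S : Finset G.E) (D : (G.subdiv S).V → ℤ) : Prop :=
  ∀ x : {e // e ∈ S}, D (Sum.inr x) = -1

/-- A pseudo-root: `2 D + Div(φ) = K_{Γ^S}` for some acyclic flow `φ` on `Γ^S`. -/
def IsPseudoRoot (S : Finset G.E) (D : (G.subdiv S).V → ℤ) : Prop :=
  G.IsPseudoDivisor S D ∧
    ∃ φ : (G.subdiv S).E → ℤ, (G.subdiv S).Acyclic φ ∧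
      ∀ v, 2 * D v + (G.subdiv S).divOf φ v = (G.subdiv S).K v

/-- Semistability of a pseudo-divisor: semistability on the subdivision with
respect to the (extended) canonical polarization. -/
def IsSemistablePR (S : Finset G.E) (D : (G.subdiv S).V → ℤ) : Prop :=
  (G.subdiv S).Semistable (G.subdiv S).canPol D

/-- `β_{E,D}` for pseudo-divisors, on subsets of the original vertices. -/
def betaPoly (S : Finset G.E) (D : (G.subdiv S).V → ℤ) (W : Finset G.V) : ℚ :=
  (∑ v ∈ W, (D (Sum.inl v) : ℚ)) -
    (∑ v ∈ W, (G.canPol v + (G.degIn S v : ℚ) / 2)) +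
    ((Finset.univ.filter (fun e => e ∉ S ∧ G.crossing W e)).card : ℚ) / 2

/-- Polystability of a pseudo-divisor. -/
def IsPolystable (S : Finset G.E) (D : (G.subdiv S).V → ℤ) : Prop :=
  ∀ W : Finset G.V,
    0 ≤ G.betaPoly S D W ∧ ((∃ e, e ∉ S ∧ G.crossing W e) → 0 < G.betaPoly S D W)

/-- The divisor `D_P` attached to a cyclic subgraph `P`, on `Γ^{E_P}` with
`E_P = Pᶜ`. -/
def DP (P : Finset G.E) : (G.subdiv Pᶜ).V → ℤ := fun x =>
  match x with
  | .inl v => (G.deg v : ℤ) - (G.degIn P v : ℤ) / 2 - 1 + (G.w v : ℤ)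
  | .inr _ => -1

/-- The data of a semistable root-graph together with its acyclic flow. -/
def IsSemistableRootTriple (S : Finset G.E) (D : (G.subdiv S).V → ℤ)
    (φ : (G.subdiv S).E → ℤ) : Prop :=
  G.IsPseudoDivisor S D ∧ G.IsSemistablePR S D ∧ (G.subdiv S).Acyclic φ ∧
    ∀ v, 2 * D v + (G.subdiv S).divOf φ v = (G.subdiv S).K v

/-- The induced subgraph on a vertex set `W`. -/
def induce (W : Finset G.V) : MGraph where
  V := {v // v ∈ W}
  E := {e // G.src e ∈ W ∧ G.tgt e ∈ W}
  src := fun e => ⟨G.src e.1, e.2.1⟩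
  tgt := fun e => ⟨G.tgt e.1, e.2.2⟩
  w := fun v => G.w v.1

/-- Number of edges between `W` and `Wᶜ` incident to `v`. -/
def degCross (W : Finset G.V) (v : G.V) : ℕ :=
  (Finset.univ.filter (fun e => G.src e = v ∧ G.crossing W e)).card +
    (Finset.univ.filter (fun e => G.tgt e = v ∧ G.crossing W e)).card

/-- A specialization (iterated edge contraction) of weighted graphs. -/
structure Spec (G G' : MGraph) where
  vmap : G.V → G'.V
  emap : G'.E → G.E
  emap_inj : Function.Injective emap
  vmap_surj : Function.Surjective vmap
  src_comm : ∀ e', vmap (G.src (emap e')) = G'.src e'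
  tgt_comm : ∀ e', vmap (G.tgt (emap e')) = G'.tgt e'
  contract_eq : ∀ e : G.E, e ∉ Finset.univ.image emap → vmap (G.src e) = vmap (G.tgt e)
  fiber_conn : ∀ u v : G.V, vmap u = vmap v →
    Relation.ReflTransGen
      (fun a b => ∃ e, e ∉ Finset.univ.image emap ∧
        ((G.src e = a ∧ G.tgt e = b) ∨ (G.src e = b ∧ G.tgt e = a))) u v
  weight_eq : ∀ v' : G'.V,
    (G'.w v' : ℤ) =
      (∑ v ∈ Finset.univ.filter (fun v => vmap v = v'), (G.w v : ℤ)) +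
        ((Finset.univ.filter (fun e : G.E =>
            e ∉ Finset.univ.image emap ∧ vmap (G.src e) = v')).card : ℤ) -
        ((Finset.univ.filter (fun v : G.V => vmap v = v')).card : ℤ) + 1

/-- Pushforward of a divisor along a specialization. -/
def Spec.pushDiv {G G' : MGraph} (σ : Spec G G') (D : G.V → ℤ) : G'.V → ℤ :=
  fun v' => ∑ v ∈ Finset.univ.filter (fun v => σ.vmap v = v'), D v

/-- Pushforward of a polarization along a specialization. -/
def Spec.pushPol {G G' : MGraph} (σ : Spec G G') (μ : G.V → ℚ) : G'.V → ℚ :=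
  fun v' => ∑ v ∈ Finset.univ.filter (fun v => σ.vmap v = v'), μ v

/-- The induced map on vertices of subdivisions. -/
def Spec.subdivVmap {G G' : MGraph} (σ : Spec G G') (S : Finset G.E)
    (S' : Finset G'.E) : (G.subdiv S).V → (G'.subdiv S').V := fun x =>
  match x with
  | .inl v => .inl (σ.vmap v)
  | .inr e =>
    if h : ∃ e' : {e' // e' ∈ S'}, σ.emap e'.1 = e.1 then .inr h.choose
    else .inl (σ.vmap (G.src e.1))

/-- Pushforward of a pseudo-divisor (its divisor part) along a specialization. -/
def Spec.pushSubdivDiv {G G' : MGraph} (σ : Spec G G') (S : Finset G.E)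
    (S' : Finset G'.E) (D : (G.subdiv S).V → ℤ) : (G'.subdiv S').V → ℤ := fun y =>
  ∑ x ∈ Finset.univ.filter (fun x => σ.subdivVmap S S' x = y), D x

/-- Extension by zero along the edge injection of a specialization. -/
def Spec.extendBy {G G' : MGraph} (σ : Spec G G') (x : G'.E → ℝ) : G.E → ℝ :=
  fun e => if h : ∃ e', σ.emap e' = e then x h.choose else 0

/-- Same-graph contraction of subdivisions (for `S ⊆ S'`): the vertex map.
`σb e` selects the endpoint to which the exceptional vertex of a contracted
edge `e ∈ S' \ S` is merged (`true` = target, `false` = source). -/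
def contrVmap (S S' : Finset G.E) (σb : G.E → Bool) :
    (G.subdiv S').V → (G.subdiv S).V := fun x =>
  match x with
  | .inl v => .inl v
  | .inr e =>
    if h : e.1 ∈ S then .inr ⟨e.1, h⟩
    else .inl (if σb e.1 then G.tgt e.1 else G.src e.1)

/-- Same-graph contraction of subdivisions: the edge injection. -/
def contrEmap (S S' : Finset G.E) (hSS : S ⊆ S') (σb : G.E → Bool) :
    (G.subdiv S).E → (G.subdiv S').E := fun x =>
  match x with
  | .inl e =>
    if h : e.1 ∈ S' then .inr (⟨e.1, h⟩, !σb e.1) else .inl ⟨e.1, h⟩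
  | .inr eb => .inr (⟨eb.1.1, hSS eb.1.2⟩, eb.2)

/-- Specialization of pseudo-divisors over a fixed graph. -/
def PDSpec (S' : Finset G.E) (D' : (G.subdiv S').V → ℤ) (S : Finset G.E)
    (D : (G.subdiv S).V → ℤ) : Prop :=
  S ⊆ S' ∧ ∃ σb : G.E → Bool,
    ∀ v, D v = ∑ x ∈ Finset.univ.filter (fun x => G.contrVmap S S' σb x = v), D' x

/-- Specialization of semistable root-graphs over a fixed graph: a
specialization of pseudo-divisors pushing the acyclic flow forward. -/
def RootSpec (S' : Finset G.E) (D' : (G.subdiv S').V → ℤ) (S : Finset G.E)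
    (D : (G.subdiv S).V → ℤ) : Prop :=
  ∃ hSS : S ⊆ S', ∃ σb : G.E → Bool,
    (∀ v, D v = ∑ x ∈ Finset.univ.filter (fun x => G.contrVmap S S' σb x = v), D' x) ∧
    ∀ φ' φ : _, (G.subdiv S').Acyclic φ' →
      (∀ v, 2 * D' v + (G.subdiv S').divOf φ' v = (G.subdiv S').K v) →
      (G.subdiv S).Acyclic φ →
      (∀ v, 2 * D v + (G.subdiv S).divOf φ v = (G.subdiv S).K v) →
      ∀ x, φ x = φ' (G.contrEmap S S' hSS σb x)

/-- Underlying edge of `Γ` of an edge of `Γ^S`. -/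
def underE (S : Finset G.E) : (G.subdiv S).E → G.E := fun x =>
  match x with
  | .inl e => e.1
  | .inr eb => eb.1.1

/-- A specialization of triples `(Γ, E, D) ≥ (Γ', E', D')`. -/
structure TripleSpec (G : MGraph) (S : Finset G.E) (D : (G.subdiv S).V → ℤ)
    (G' : MGraph) (S' : Finset G'.E) (D' : (G'.subdiv S').V → ℤ) where
  base : Spec G G'
  sub : Spec (G.subdiv S) (G'.subdiv S')
  vcomm : ∀ v : G.V, sub.vmap (Sum.inl v) = Sum.inl (base.vmap v)
  ecomm : ∀ x : (G'.subdiv S').E, G.underE S (sub.emap x) = base.emap (G'.underE S' x)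
  edges_sub : ∀ e' ∈ S', base.emap e' ∈ S
  push_eq : ∀ y, D' y = ∑ x ∈ Finset.univ.filter (fun x => sub.vmap x = y), D x

/-- A triple specialization is a specialization of root-graphs when it pushes
the (unique) acyclic flows forward. -/
def TripleSpec.IsRootSpec {G : MGraph} {S : Finset G.E} {D : (G.subdiv S).V → ℤ}
    {G' : MGraph} {S' : Finset G'.E} {D' : (G'.subdiv S').V → ℤ}
    (T : TripleSpec G S D G' S' D') : Prop :=
  ∀ φ φ', (G.subdiv S).Acyclic φ →
    (∀ v, 2 * D v + (G.subdiv S).divOf φ v = (G.subdiv S).K v) →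
    (G'.subdiv S').Acyclic φ' →
    (∀ v, 2 * D' v + (G'.subdiv S').divOf φ' v = (G'.subdiv S').K v) →
    ∀ x, φ' x = φ (T.sub.emap x)

/-- The cone `λ` attached to a flow: nonnegative orthant cut by the cycle
equations. -/
def lambdaSet (φ : G.E → ℤ) : Set (G.E → ℝ) :=
  {x | (∀ e, 0 ≤ x e) ∧ ∀ c : List G.OEdge, G.IsOrientedCycle c →
      ((c.map (fun oe => (G.flowVal φ oe : ℝ) * x oe.1)).sum) = 0}

/-- Its relative interior (intersection with the positive orthant). -/
def lambdaInt (φ : G.E → ℤ) : Set (G.E → ℝ) :=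
  {x | (∀ e, 0 < x e) ∧ ∀ c : List G.OEdge, G.IsOrientedCycle c →
      ((c.map (fun oe => (G.flowVal φ oe : ℝ) * x oe.1)).sum) = 0}

/-- Faces of a cone (supporting-hyperplane definition). -/
def IsFaceOf (F C : Set (G.E → ℝ)) : Prop :=
  F = C ∨ ∃ l : (G.E → ℝ) →ₗ[ℝ] ℝ, (∀ x ∈ C, 0 ≤ l x) ∧ F = C ∩ {x | l x = 0}

/-- Facets: faces of codimension one. -/
def IsFacetOf (F C : Set (G.E → ℝ)) : Prop :=
  G.IsFaceOf F C ∧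
    Module.finrank ℝ (Submodule.span ℝ F) + 1 = Module.finrank ℝ (Submodule.span ℝ C)

/-- The vector `u_V` spanning the subspace `L_E`. -/
def uVec (S : Finset G.E) (W : Finset G.V) : (G.subdiv S).E → ℝ := fun x =>
  match x with
  | .inl _ => 0
  | .inr eb =>
    if G.crossing W eb.1.1 then
      (if (if eb.2 then G.tgt eb.1.1 else G.src eb.1.1) ∈ W then 1 else -1)
    else 0

/-- The subspace `L_E ⊆ ℝ^{E(Γ^S)}`. -/
def LSub (S : Finset G.E) : Submodule ℝ ((G.subdiv S).E → ℝ) :=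
  Submodule.span ℝ {u | ∃ W : Finset G.V, (∀ e, G.crossing W e → e ∈ S) ∧ u = G.uVec S W}

/-- The diagonal map `δ_E : ℝ^{E(Γ)} → ℝ^{E(Γ^S)}`. -/
def deltaMap (S : Finset G.E) (x : G.E → ℝ) : (G.subdiv S).E → ℝ := fun e' =>
  match e' with
  | .inl e => x e.1
  | .inr eb => x eb.1.1

/-- One step of a `φ`-path avoiding the edges of `A`. -/
def phiStep (φ : G.E → ℤ) (A : Finset G.E) (a b : G.V) : Prop :=
  ∃ oe : G.OEdge, oe.1 ∉ A ∧ 0 ≤ G.flowVal φ oe ∧ G.osrc oe = a ∧ G.otgt oe = b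

/-- Reachability by `φ`-paths avoiding the edges of `A`. -/
def PhiReach (φ : G.E → ℤ) (A : Finset G.E) : G.V → G.V → Prop :=
  Relation.ReflTransGen (G.phiStep φ A)

/-- The refinement of `Γ` inserting `m e` vertices in the interior of each
edge `e`. -/
def refine (m : G.E → ℕ) : MGraph where
  V := G.V ⊕ (Σ e : G.E, Fin (m e))
  E := Σ e : G.E, Fin (m e + 1)
  src := fun x =>
    if h : (x.2 : ℕ) = 0 then .inl (G.src x.1)
    else .inr ⟨x.1, ⟨(x.2 : ℕ) - 1, by have := x.2.isLt; omega⟩⟩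
  tgt := fun x =>
    if h : (x.2 : ℕ) = m x.1 then .inl (G.tgt x.1)
    else .inr ⟨x.1, ⟨(x.2 : ℕ), by have := x.2.isLt; omega⟩⟩
  w := fun v =>
    match v with
    | .inl v => G.w v
    | .inr _ => 0

end MGraph

/-!
Polystability pins down the acyclic flow `φ`: it vanishes on the edges of `Γ` and sends one
unit into every exceptional vertex from each side. Indeed, if an oriented edge carried more,
the vertices reachable from its head along edges of nonnegative flow would form a set whose
`β` is negative (non-positive, for an edge of `Γ`), against polystability.

For this flow `φ · δ_S(x)` is the gradient of the function equal to `x_e` at the exceptional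
vertex of `e` and to `0` on `Γ`, so `δ_S` maps the orthant into `λ`. Averaging the two halves of
each subdivided edge is a left inverse of `δ_S` killing `L_S`, whence injectivity. Conversely, for
`y ∈ λ` the cycle equations make `φ · y` a gradient `dg`; `g` is constant along the edges of `Γ`
outside `S`, and `δ_S(avg y) - y` is the combination of the vectors `u_V` over the level sets
of `g`, hence lies in `L_S`.
-/

namespace MGraph

attribute [local instance] Classical.propDecidable

section Walks

variable {G : MGraph}

def StepAlong (G : MGraph) (Q : G.OEdge → Prop) (a b : G.V) : Prop :=
  ∃ oe : G.OEdge, Q oe ∧ G.osrc oe = a ∧ G.otgt oe = b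

def ReachAlong (G : MGraph) (Q : G.OEdge → Prop) : G.V → G.V → Prop :=
  Relation.ReflTransGen (G.StepAlong Q)

@[simp] lemma osrc_flip (oe : G.OEdge) : G.osrc (oe.1, !oe.2) = G.otgt oe := by
  obtain ⟨e, b⟩ := oe; cases b <;> rfl

@[simp] lemma otgt_flip (oe : G.OEdge) : G.otgt (oe.1, !oe.2) = G.osrc oe := by
  obtain ⟨e, b⟩ := oe; cases b <;> rfl

lemma flowVal_flip (φ : G.E → ℤ) (oe : G.OEdge) :
    G.flowVal φ (oe.1, !oe.2) = -G.flowVal φ oe := by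
  obtain ⟨e, b⟩ := oe; cases b <;> simp [flowVal]

lemma isOrientedCycle_iff {c : List G.OEdge} :
    G.IsOrientedCycle c ↔ c ≠ [] ∧ (c.map Prod.fst).Nodup ∧ (c.map G.osrc).Nodup ∧
      c.map G.otgt = (c.map G.osrc).rotate 1 := by
  refine and_congr_right fun hne => and_congr_right fun _ => and_congr_right fun _ => ?_
  have hpos : 0 < c.length := List.length_pos_iff.mpr hne
  constructor
  · intro h
    refine List.ext_getElem (by simp) fun i h₁ _ => ?_
    have hi : i < c.length := by simpa using h₁
    simpa [List.getElem_rotate] using h ⟨i, hi⟩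
  · intro h i
    have := congrArg (·[i]?) h
    simpa [List.getElem?_rotate, List.getElem_rotate, hpos] using this

lemma IsOrientedCycle.sum_map_eq_zero {c : List G.OEdge} (hc : G.IsOrientedCycle c)
    {f : G.OEdge → ℝ} (g : G.V → ℝ) (hf : ∀ oe, f oe = g (G.otgt oe) - g (G.osrc oe)) :
    (c.map f).sum = 0 := by
  have hrot : c.map (g ∘ G.otgt) = (c.map (g ∘ G.osrc)).rotate 1 := by
    rw [← List.map_map, (isOrientedCycle_iff.mp hc).2.2.2, List.map_rotate, List.map_map]
  rw [List.map_congr_left fun oe _ => hf oe, ← Multiset.sum_coe, ← Multiset.map_coe,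
    Multiset.sum_map_sub, Multiset.map_coe, Multiset.map_coe, Multiset.sum_coe, Multiset.sum_coe]
  change (c.map (g ∘ G.otgt)).sum - (c.map (g ∘ G.osrc)).sum = 0
  rw [hrot, (List.rotate_perm _ 1).sum_eq, sub_self]

/-- A simple path: `verts` lists its vertices in two ways, as sources followed by `v` and as
`u` followed by targets, which forces consecutive edges to meet. -/
structure IsSimplePath (G : MGraph) (Q : G.OEdge → Prop) (u v : G.V) (p : List G.OEdge) :
    Prop where
  mem : ∀ oe ∈ p, Q oe
  verts : p.map G.osrc ++ [v] = u :: p.map G.otgt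
  nodup_verts : (u :: p.map G.otgt).Nodup
  nodup_edges : (p.map Prod.fst).Nodup

namespace IsSimplePath

variable {Q : G.OEdge → Prop} {u v : G.V}

lemma nil (u : G.V) : G.IsSimplePath Q u u [] := ⟨by simp, by simp, by simp, by simp⟩

lemma of_cons {oe : G.OEdge} {p : List G.OEdge} (h : G.IsSimplePath Q u v (oe :: p)) :
    G.osrc oe = u ∧ G.IsSimplePath Q (G.otgt oe) v p := by
  have hv := h.verts
  simp only [List.map_cons, List.cons_append, List.cons.injEq] at hv
  refine ⟨hv.1, fun x hx => h.mem x (List.mem_cons_of_mem _ hx), hv.2, ?_, ?_⟩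
  · simpa using h.nodup_verts.of_cons
  · exact (List.nodup_cons.mp h.nodup_edges).2

lemma cons {oe : G.OEdge} {p : List G.OEdge} (h : G.IsSimplePath Q (G.otgt oe) v p)
    (hQ : Q oe) (hu : G.osrc oe ∉ G.otgt oe :: p.map G.otgt) :
    G.IsSimplePath Q (G.osrc oe) v (oe :: p) := by
  refine ⟨?_, by simp [h.verts], List.nodup_cons.mpr ⟨hu, h.nodup_verts⟩, ?_⟩
  · simpa [hQ] using h.mem
  · refine List.nodup_cons.mpr ⟨fun hmem => ?_, h.nodup_edges⟩
    obtain ⟨oe', hoe', he⟩ := List.mem_map.mp hmem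
    have hsrc : G.osrc oe' ∈ G.otgt oe :: p.map G.otgt := by
      rw [← h.verts]; exact List.mem_append_left _ (List.mem_map_of_mem hoe')
    have hends : G.osrc oe = G.osrc oe' ∨ G.osrc oe = G.otgt oe' := by
      obtain ⟨e, b⟩ := oe; obtain ⟨e', b'⟩ := oe'
      simp only at he; subst he
      cases b <;> cases b' <;> simp [osrc, otgt]
    rcases hends with hends | hends
    · exact hu (hends ▸ hsrc)
    · exact hu (hends ▸ List.mem_cons_of_mem _ (List.mem_map_of_mem hoe'))

lemma drop_until {w : G.V} :
    ∀ {p : List G.OEdge} {u : G.V}, G.IsSimplePath Q u v p → w ∈ u :: p.map G.otgt →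
      ∃ q, G.IsSimplePath Q w v q
  | [], u, h, hw => by
    obtain rfl : w = u := by simpa using hw
    obtain rfl : w = v := by simpa using h.verts.symm
    exact ⟨[], nil w⟩
  | oe :: p, u, h, hw => by
    rcases List.mem_cons.mp hw with rfl | hw
    · exact ⟨_, h⟩
    · exact drop_until (of_cons h).2 (by simpa using hw)

end IsSimplePath

lemma ReachAlong.exists_isSimplePath {Q : G.OEdge → Prop} {u v : G.V}
    (h : G.ReachAlong Q u v) : ∃ p, G.IsSimplePath Q u v p := by
  induction h using Relation.ReflTransGen.head_induction_on with
  | refl => exact ⟨[], .nil v⟩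
  | head hstep _ ih =>
    obtain ⟨p, hp⟩ := ih
    obtain ⟨oe, hQ, rfl, rfl⟩ := hstep
    by_cases hmem : G.osrc oe ∈ G.otgt oe :: p.map G.otgt
    · exact hp.drop_until hmem
    · exact ⟨oe :: p, hp.cons hQ hmem⟩

lemma IsSimplePath.sum_map_eq {Q : G.OEdge → Prop} {f : G.OEdge → ℝ} {g : G.V → ℝ}
    (hf : ∀ oe, Q oe → f oe = g (G.otgt oe) - g (G.osrc oe)) :
    ∀ {p : List G.OEdge} {u v : G.V}, G.IsSimplePath Q u v p → (p.map f).sum = g v - g u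
  | [], u, v, h => by
    obtain rfl : v = u := by simpa using h.verts
    simp
  | oe :: p, u, v, h => by
    obtain ⟨rfl, hp⟩ := h.of_cons
    rw [List.map_cons, List.sum_cons, hp.sum_map_eq hf, hf oe (h.mem oe List.mem_cons_self)]
    ring

lemma IsSimplePath.isOrientedCycle_append {Q : G.OEdge → Prop} {u v : G.V} {p : List G.OEdge}
    (h : G.IsSimplePath Q u v p) {oe : G.OEdge} (hs : G.osrc oe = v) (ht : G.otgt oe = u)
    (hnm : oe.1 ∉ p.map Prod.fst) : G.IsOrientedCycle (p ++ [oe]) := by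
  have hsrc : (p ++ [oe]).map G.osrc = u :: p.map G.otgt := by simp [hs, h.verts]
  refine isOrientedCycle_iff.mpr ⟨by simp, ?_, by rw [hsrc]; exact h.nodup_verts, ?_⟩
  · simp only [List.map_append, List.map_cons, List.map_nil]
    exact List.nodup_append.mpr ⟨h.nodup_edges, List.nodup_singleton _,
      fun a ha b hb => by rw [List.mem_singleton.mp hb]; exact fun hab => hnm (hab ▸ ha)⟩
  · rw [hsrc, List.rotate_cons_succ, List.rotate_zero]
    simp [ht]

end Walks

section Potentials

variable {G : MGraph} (w : G.OEdge → ℝ)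

def IsPotentialOn (A : Finset G.E) (g : G.V → ℝ) : Prop :=
  ∀ oe : G.OEdge, oe.1 ∈ A → w oe = g (G.otgt oe) - g (G.osrc oe)

variable {w}

lemma IsPotentialOn.eq_sub_of_reachAlong (hcyc : ∀ c, G.IsOrientedCycle c → (c.map w).sum = 0)
    {A : Finset G.E} {g : G.V → ℝ} (hg : IsPotentialOn w A g) {ε : G.E} (hε : ε ∉ A)
    (hr : G.ReachAlong (fun oe => oe.1 ∈ A) (G.tgt ε) (G.src ε)) :
    w (ε, true) = g (G.tgt ε) - g (G.src ε) := by
  obtain ⟨p, hp⟩ := hr.exists_isSimplePath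
  have hnm : ε ∉ p.map Prod.fst := fun hin => by
    obtain ⟨oe, hoe, rfl⟩ := List.mem_map.mp hin
    exact hε (hp.mem oe hoe)
  have hsum := hcyc _ (hp.isOrientedCycle_append (oe := (ε, true)) rfl rfl hnm)
  rw [List.map_append, List.sum_append, hp.sum_map_eq hg] at hsum
  simp only [List.map_cons, List.map_nil, List.sum_cons, List.sum_nil] at hsum
  linarith

/-- Shifting `g` by a constant on the component of `tgt ε`, which misses `src ε`, prescribes any
value across `ε`. -/
lemma IsPotentialOn.exists_shift {A : Finset G.E} {g : G.V → ℝ} (hg : IsPotentialOn w A g)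
    {ε : G.E} (hr : ¬G.ReachAlong (fun oe => oe.1 ∈ A) (G.tgt ε) (G.src ε)) (a : ℝ) :
    ∃ g', IsPotentialOn w A g' ∧ g' (G.tgt ε) - g' (G.src ε) = a := by
  set R := G.ReachAlong (fun oe => oe.1 ∈ A) (G.tgt ε)
  refine ⟨fun v => g v + if R v then a - (g (G.tgt ε) - g (G.src ε)) else 0, ?_, ?_⟩
  · intro oe hoe
    have hR : R (G.osrc oe) ↔ R (G.otgt oe) :=
      ⟨fun h => h.tail ⟨oe, hoe, rfl, rfl⟩,
        fun h => h.tail ⟨(oe.1, !oe.2), hoe, osrc_flip oe, otgt_flip oe⟩⟩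
    simp only [hg oe hoe, if_congr hR rfl rfl]
    ring
  · have hR : R (G.tgt ε) := Relation.ReflTransGen.refl
    simp only [if_pos hR, if_neg hr]
    ring

lemma IsPotentialOn.insert (hanti : ∀ oe, w (oe.1, !oe.2) = -w oe) {A : Finset G.E}
    {g : G.V → ℝ} (hg : IsPotentialOn w A g) {ε : G.E}
    (hε : w (ε, true) = g (G.tgt ε) - g (G.src ε)) : IsPotentialOn w (insert ε A) g := by
  rintro ⟨e, b⟩ hoe
  rcases Finset.mem_insert.mp hoe with rfl | h
  · cases b
    · have := hanti (e, true)
      simp only [Bool.not_true] at this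
      simp [this, hε, osrc, otgt]
    · exact hε
  · exact hg _ h

lemma exists_potential (hanti : ∀ oe, w (oe.1, !oe.2) = -w oe)
    (hcyc : ∀ c, G.IsOrientedCycle c → (c.map w).sum = 0) :
    ∃ g : G.V → ℝ, ∀ oe, w oe = g (G.otgt oe) - g (G.osrc oe) := by
  suffices ∀ A : Finset G.E, ∃ g, IsPotentialOn w A g by
    obtain ⟨g, hg⟩ := this Finset.univ
    exact ⟨g, fun oe => hg oe (Finset.mem_univ _)⟩
  intro A
  induction A using Finset.induction_on with
  | empty => exact ⟨0, fun _ h => absurd h (Finset.notMem_empty _)⟩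
  | insert ε A hε ih =>
    obtain ⟨g, hg⟩ := ih
    by_cases hr : G.ReachAlong (fun oe => oe.1 ∈ A) (G.tgt ε) (G.src ε)
    · exact ⟨g, hg.insert hanti (hg.eq_sub_of_reachAlong hcyc hε hr)⟩
    · obtain ⟨g', hg', hε'⟩ := hg.exists_shift hr (w (ε, true))
      exact ⟨g', hg'.insert hanti hε'.symm⟩

end Potentials

section Subdivision

variable {G : MGraph} {S : Finset G.E}

@[simp] lemma subdiv_src_inl (e : {e // e ∉ S}) :
    (G.subdiv S).src (Sum.inl e) = Sum.inl (G.src e) := rfl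

@[simp] lemma subdiv_tgt_inl (e : {e // e ∉ S}) :
    (G.subdiv S).tgt (Sum.inl e) = Sum.inl (G.tgt e) := rfl

@[simp] lemma subdiv_src_inr_false (x : {e // e ∈ S}) :
    (G.subdiv S).src (Sum.inr (x, false)) = Sum.inl (G.src x) := rfl

@[simp] lemma subdiv_tgt_inr_false (x : {e // e ∈ S}) :
    (G.subdiv S).tgt (Sum.inr (x, false)) = Sum.inr x := rfl

@[simp] lemma subdiv_src_inr_true (x : {e // e ∈ S}) :
    (G.subdiv S).src (Sum.inr (x, true)) = Sum.inr x := rfl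

@[simp] lemma subdiv_tgt_inr_true (x : {e // e ∈ S}) :
    (G.subdiv S).tgt (Sum.inr (x, true)) = Sum.inl (G.tgt x) := rfl

@[simp] lemma subdiv_w_inr (x : {e // e ∈ S}) : (G.subdiv S).w (Sum.inr x) = 0 := rfl

/-! `(G.subdiv S).V` is not reducibly a sum type, so `simp` needs the constructor lemmas of
`Sum` restated at this type. -/

@[simp] lemma subdiv_inl_inj {u v : G.V} :
    @Eq (G.subdiv S).V (Sum.inl u) (Sum.inl v) ↔ u = v := Sum.inl_injective.eq_iff

@[simp] lemma subdiv_inr_inj {x y : {e // e ∈ S}} :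
    @Eq (G.subdiv S).V (Sum.inr x) (Sum.inr y) ↔ x = y := Sum.inr_injective.eq_iff

@[simp] lemma subdiv_inr_ne_inl {v : G.V} {x : {e // e ∈ S}} :
    @Ne (G.subdiv S).V (Sum.inr x) (Sum.inl v) := Sum.inr_ne_inl

lemma sum_subdiv_V {M : Type} [AddCommMonoid M] (f : (G.subdiv S).V → M) :
    ∑ v, f v = ∑ v : G.V, f (Sum.inl v) + ∑ x : {e // e ∈ S}, f (Sum.inr x) :=
  Fintype.sum_sum_type (α₁ := G.V) (α₂ := {e // e ∈ S}) f

lemma sum_subdiv_E {M : Type} [AddCommMonoid M] (f : (G.subdiv S).E → M) (f₀ : G.E → M)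
    (h₀ : ∀ e : {e // e ∉ S}, f (Sum.inl e) = f₀ e) :
    ∑ x, f x = ∑ e ∈ Sᶜ, f₀ e +
      ∑ x : {e // e ∈ S}, (f (Sum.inr (x, false)) + f (Sum.inr (x, true))) := by
  rw [Finset.sum_subtype Sᶜ (F := inferInstance) (fun _ => Finset.mem_compl)]
  refine (Fintype.sum_sum_type (α₁ := {e // e ∉ S}) (α₂ := {e // e ∈ S} × Bool) f).trans ?_
  simp only [Fintype.sum_prod_type, Fintype.sum_bool, ← h₀, add_comm (f (Sum.inr (_, true)))]

lemma subdiv_deg_inl (v : G.V) : (G.subdiv S).deg (Sum.inl v) = G.deg v := by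
  simp only [deg, Finset.card_filter]
  rw [sum_subdiv_E _ (fun e => if G.src e = v then 1 else 0) (fun e => by simp),
    sum_subdiv_E _ (fun e => if G.tgt e = v then 1 else 0) (fun e => by simp)]
  simp only [subdiv_src_inr_false, subdiv_src_inr_true, subdiv_tgt_inr_false, subdiv_tgt_inr_true,
    subdiv_inl_inj, subdiv_inr_ne_inl, if_false, add_zero, zero_add,
    Finset.sum_coe_sort S (fun e => if G.src e = v then 1 else 0),
    Finset.sum_coe_sort S (fun e => if G.tgt e = v then 1 else 0), Finset.sum_compl_add_sum]

lemma subdiv_deg_inr (x : {e // e ∈ S}) : (G.subdiv S).deg (Sum.inr x) = 2 := by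
  simp only [deg, Finset.card_filter]
  rw [sum_subdiv_E _ 0 (fun e => by simp), sum_subdiv_E _ 0 (fun e => by simp)]
  simp

lemma subdiv_K_inr (x : {e // e ∈ S}) : (G.subdiv S).K (Sum.inr x) = 0 := by
  simp [K, subdiv_deg_inr]

lemma subdiv_canPol_inl (v : G.V) : (G.subdiv S).canPol (Sum.inl v) = G.canPol v := by
  simp only [canPol, K, subdiv_deg_inl]
  rfl

lemma subdiv_canPol_inr (x : {e // e ∈ S}) : (G.subdiv S).canPol (Sum.inr x) = 0 := by
  simp [canPol, subdiv_K_inr]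

lemma subdiv_divOf_inr (φ : (G.subdiv S).E → ℤ) (x : {e // e ∈ S}) :
    (G.subdiv S).divOf φ (Sum.inr x) = φ (Sum.inr (x, false)) - φ (Sum.inr (x, true)) := by
  unfold divOf
  rw [sum_subdiv_E _ 0 (fun e => by simp), sum_subdiv_E _ 0 (fun e => by simp)]
  simp

end Subdivision

section Stability

variable {G : MGraph} {S : Finset G.E}

lemma sum_degIn (A : Finset G.E) (W : Finset G.V) :
    ∑ v ∈ W, G.degIn A v =
      ∑ e ∈ A, ((if G.src e ∈ W then 1 else 0) + (if G.tgt e ∈ W then 1 else 0)) := by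
  simp only [degIn, Finset.card_filter, Finset.sum_add_distrib]
  rw [Finset.sum_comm, Finset.sum_comm (s := W)]
  simp only [Finset.sum_ite_eq]

lemma sum_filter_subdiv (p : (G.subdiv S).V → Prop) (f : (G.subdiv S).V → ℚ) :
    ∑ v ∈ Finset.univ.filter p, f v =
      ∑ v ∈ Finset.univ.filter (fun v => p (Sum.inl v)), f (Sum.inl v) +
        ∑ x : {e // e ∈ S}, if p (Sum.inr x) then f (Sum.inr x) else 0 := by
  rw [Finset.sum_filter, Finset.sum_filter, sum_subdiv_V]

lemma delta_filter_subdiv (p : (G.subdiv S).V → Prop) :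
    ((G.subdiv S).delta (Finset.univ.filter p) : ℚ) =
      ((Finset.univ.filter fun e =>
          e ∉ S ∧ G.crossing (Finset.univ.filter fun v => p (Sum.inl v)) e).card : ℚ) +
      ∑ x : {e // e ∈ S}, ((if p (Sum.inl (G.src x)) ≠ p (Sum.inr x) then 1 else 0) +
        (if p (Sum.inr x) ≠ p (Sum.inl (G.tgt x)) then 1 else 0)) := by
  set W := Finset.univ.filter fun v => p (Sum.inl v)
  have hcard : ((Finset.univ.filter fun e => e ∉ S ∧ G.crossing W e).card : ℚ) =
      ∑ e ∈ Sᶜ, if G.crossing W e then 1 else 0 := by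
    rw [Finset.sum_boole]
    congr 2
    ext e
    simp
  have hcr₀ : ∀ e : {e // e ∉ S},
      (G.subdiv S).crossing (Finset.univ.filter p) (Sum.inl e) ↔ G.crossing W e :=
    fun e => by simp only [crossing, W, Finset.mem_filter, Finset.mem_univ, true_and]; rfl
  have hcr₁ : ∀ x : {e // e ∈ S}, (G.subdiv S).crossing (Finset.univ.filter p) (Sum.inr (x, false))
      ↔ p (Sum.inl (G.src x)) ≠ p (Sum.inr x) := fun x => by
    simp only [crossing, Finset.mem_filter, Finset.mem_univ, true_and]; rfl
  have hcr₂ : ∀ x : {e // e ∈ S}, (G.subdiv S).crossing (Finset.univ.filter p) (Sum.inr (x, true))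
      ↔ p (Sum.inr x) ≠ p (Sum.inl (G.tgt x)) := fun x => by
    simp only [crossing, Finset.mem_filter, Finset.mem_univ, true_and]; rfl
  rw [delta, Finset.card_filter, Nat.cast_sum, hcard,
    sum_subdiv_E _ (fun e => if G.crossing W e then 1 else 0) fun e => by
      simp only [hcr₀, Nat.cast_ite, Nat.cast_one, Nat.cast_zero]]
  simp only [hcr₁, hcr₂, Nat.cast_ite, Nat.cast_one, Nat.cast_zero]

lemma betaPoly_le_beta_subdiv {D : (G.subdiv S).V → ℤ} (hD : G.IsPseudoDivisor S D)
    (p : (G.subdiv S).V → Prop) :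
    G.betaPoly S D (Finset.univ.filter fun v => p (Sum.inl v)) ≤
      (G.subdiv S).beta (G.subdiv S).canPol D (Finset.univ.filter p) := by
  set W := Finset.univ.filter fun v => p (Sum.inl v)
  have hD' : ∑ v ∈ Finset.univ.filter p, (D v : ℚ) =
      ∑ v ∈ W, (D (Sum.inl v) : ℚ) - ∑ x : {e // e ∈ S}, if p (Sum.inr x) then 1 else 0 := by
    have hD₁ : ∀ x, D (Sum.inr x) = -1 := hD
    rw [sum_filter_subdiv, sub_eq_add_neg, ← Finset.sum_neg_distrib]
    congr 1
    refine Finset.sum_congr rfl fun x _ => ?_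
    split_ifs <;> simp [hD₁]
  have hμ : ∑ v ∈ Finset.univ.filter p, (G.subdiv S).canPol v = ∑ v ∈ W, G.canPol v := by
    simp [sum_filter_subdiv, subdiv_canPol_inl, subdiv_canPol_inr, W]
  have hdeg : ∑ v ∈ W, (G.degIn S v : ℚ) = ∑ x : {e // e ∈ S},
      ((if p (Sum.inl (G.src x)) then 1 else 0) + (if p (Sum.inl (G.tgt x)) then 1 else 0)) := by
    rw [← Nat.cast_sum, sum_degIn, ← Finset.sum_coe_sort S]
    push_cast
    simp [W]
  -- An exceptional vertex in the set costs `1` through `D = -1`, repaid half a unit by each of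
  -- its two half-edges, which is either cut or ends in `W`.
  have hloc : ∀ x : {e // e ∈ S}, 0 ≤ -(if p (Sum.inr x) then (1 : ℚ) else 0) +
      ((if p (Sum.inl (G.src x)) ≠ p (Sum.inr x) then 1 else 0) +
        (if p (Sum.inr x) ≠ p (Sum.inl (G.tgt x)) then 1 else 0)) / 2 +
      ((if p (Sum.inl (G.src x)) then 1 else 0) +
        (if p (Sum.inl (G.tgt x)) then 1 else 0)) / 2 := by
    intro x
    by_cases ha : p (Sum.inr x) <;> by_cases hs : p (Sum.inl (G.src x)) <;>
      by_cases ht : p (Sum.inl (G.tgt x)) <;> norm_num [ha, hs, ht]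
  have := Finset.sum_nonneg fun x (_ : x ∈ Finset.univ) => hloc x
  simp only [Finset.sum_add_distrib, ← Finset.sum_div, Finset.sum_neg_distrib] at this
  simp only [beta, betaPoly, Finset.sum_add_distrib, ← Finset.sum_div, hD', hμ,
    delta_filter_subdiv, hdeg]
  linarith

end Stability

section Cuts

variable {G : MGraph} {φ : G.E → ℤ} {W : Finset G.V}

def inflow (φ : G.E → ℤ) (W : Finset G.V) (e : G.E) : ℤ :=
  ((if G.tgt e ∈ W then 1 else 0) - (if G.src e ∈ W then 1 else 0)) * φ e

lemma sum_divOf_eq_sum_inflow (φ : G.E → ℤ) (W : Finset G.V) :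
    ∑ v ∈ W, G.divOf φ v = ∑ e, G.inflow φ W e := by
  simp only [divOf, inflow, Finset.sum_sub_distrib, sub_mul, ite_mul, one_mul, zero_mul]
  rw [Finset.sum_comm, Finset.sum_comm (s := W)]
  simp only [Finset.sum_ite_eq]

lemma inflow_eq_zero_of_not_crossing {e : G.E} (h : ¬G.crossing W e) : G.inflow φ W e = 0 := by
  have : (G.src e ∈ W) ↔ (G.tgt e ∈ W) := not_not.mp h |>.to_iff
  by_cases hs : G.src e ∈ W <;> simp [inflow, hs, this.not.mp, this.mp]

lemma one_le_inflow (hW : ∀ oe, 0 ≤ G.flowVal φ oe → G.osrc oe ∈ W → G.otgt oe ∈ W)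
    {e : G.E} (h : G.crossing W e) : 1 ≤ G.inflow φ W e := by
  by_cases hs : G.src e ∈ W <;> by_cases ht : G.tgt e ∈ W
  · exact absurd (propext (iff_of_true hs ht)) h
  · have := mt (hW (e, true)) (by simpa [osrc, otgt, hs] using ht)
    simp only [flowVal, if_true, not_le] at this
    simp only [inflow, ht, hs, if_true, if_false, zero_sub, neg_mul, one_mul]
    omega
  · have := mt (hW (e, false)) (by simpa [osrc, otgt, ht] using hs)
    simp only [flowVal, Bool.false_eq_true, if_false, not_le] at this
    simp only [inflow, ht, hs, if_true, if_false, sub_zero, one_mul]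
    omega
  · exact absurd (propext (iff_of_false hs ht)) h

lemma inflow_of_enters {oe : G.OEdge} (hs : G.osrc oe ∉ W) (ht : G.otgt oe ∈ W) :
    G.crossing W oe.1 ∧ G.inflow φ W oe.1 = G.flowVal φ oe := by
  obtain ⟨e, _ | _⟩ := oe <;> simp_all [crossing, inflow, flowVal, osrc, otgt]

lemma delta_add_flowVal_le_sum_divOf
    (hW : ∀ oe, 0 ≤ G.flowVal φ oe → G.osrc oe ∈ W → G.otgt oe ∈ W)
    {oe₀ : G.OEdge} (hs : G.osrc oe₀ ∉ W) (ht : G.otgt oe₀ ∈ W) :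
    (G.delta W : ℤ) + (G.flowVal φ oe₀ - 1) ≤ ∑ v ∈ W, G.divOf φ v := by
  set C := Finset.univ.filter fun e => G.crossing W e
  obtain ⟨hcr₀, hin₀⟩ := inflow_of_enters (φ := φ) hs ht
  have hsum : ∑ v ∈ W, G.divOf φ v = ∑ e ∈ C, G.inflow φ W e := by
    rw [sum_divOf_eq_sum_inflow, Finset.sum_filter_of_ne]
    exact fun e _ h => not_not.mp (mt inflow_eq_zero_of_not_crossing h)
  have hle : G.flowVal φ oe₀ - 1 ≤ ∑ e ∈ C, (G.inflow φ W e - 1) := by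
    rw [← hin₀]
    exact Finset.single_le_sum (f := fun e => G.inflow φ W e - 1)
      (fun e he => by simpa using one_le_inflow hW (Finset.mem_filter.mp he).2)
      (Finset.mem_filter.mpr ⟨Finset.mem_univ _, hcr₀⟩)
  rw [Finset.sum_sub_distrib, Finset.sum_const, nsmul_one] at hle
  rw [hsum]
  change (C.card : ℤ) + _ ≤ _
  omega

lemma two_mul_beta_le {D : G.V → ℤ} (heq : ∀ v, 2 * D v + G.divOf φ v = G.K v)
    (hW : ∀ oe, 0 ≤ G.flowVal φ oe → G.osrc oe ∈ W → G.otgt oe ∈ W)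
    {oe₀ : G.OEdge} (hs : G.osrc oe₀ ∉ W) (ht : G.otgt oe₀ ∈ W) :
    2 * G.beta G.canPol D W ≤ 1 - G.flowVal φ oe₀ := by
  have hK : ((2 * ∑ v ∈ W, D v + ∑ v ∈ W, G.divOf φ v : ℤ) : ℚ) = ((∑ v ∈ W, G.K v : ℤ) : ℚ) := by
    rw [Finset.mul_sum, ← Finset.sum_add_distrib, Finset.sum_congr rfl fun v _ => heq v]
  have hlow : ((G.delta W : ℤ) + (G.flowVal φ oe₀ - 1) : ℚ) ≤
      ((∑ v ∈ W, G.divOf φ v : ℤ) : ℚ) := by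
    exact_mod_cast delta_add_flowVal_le_sum_divOf hW hs ht
  simp only [beta, canPol, ← Finset.sum_div]
  push_cast at hK hlow ⊢
  linarith

lemma not_reachAlong_of_acyclic (hacyc : G.Acyclic φ) {oe₀ : G.OEdge}
    (hpos : 0 < G.flowVal φ oe₀) :
    ¬G.ReachAlong (fun oe => 0 ≤ G.flowVal φ oe) (G.otgt oe₀) (G.osrc oe₀) := by
  intro hr
  obtain ⟨p, hp⟩ := hr.exists_isSimplePath
  have hnm : oe₀.1 ∉ p.map Prod.fst := fun hin => by
    obtain ⟨⟨e, b⟩, hoe, he⟩ := List.mem_map.mp hin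
    obtain ⟨e₀, b₀⟩ := oe₀
    simp only at he; subst he
    by_cases hb : b = b₀
    · subst hb
      exact (List.nodup_cons.mp hp.nodup_verts).1 (List.mem_map_of_mem hoe)
    · have hflip : ((e, b) : G.OEdge) = (e, !b₀) := by cases b <;> cases b₀ <;> simp_all
      have hQ := hp.mem _ hoe
      have hneg := flowVal_flip φ (e, b₀)
      simp only [hflip] at hQ hneg
      omega
  refine hacyc ⟨p ++ [oe₀], hp.isOrientedCycle_append rfl rfl hnm, fun oe hoe => ?_,
    oe₀, by simp, hpos⟩
  rcases List.mem_append.mp hoe with h | h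
  · exact hp.mem _ h
  · rw [List.mem_singleton.mp h]; exact hpos.le

lemma two_mul_beta_reachAlong_le {D : G.V → ℤ} (hacyc : G.Acyclic φ)
    (heq : ∀ v, 2 * D v + G.divOf φ v = G.K v) {oe₀ : G.OEdge} (hpos : 0 < G.flowVal φ oe₀) :
    2 * G.beta G.canPol D (Finset.univ.filter
        (G.ReachAlong (fun oe => 0 ≤ G.flowVal φ oe) (G.otgt oe₀))) ≤ 1 - G.flowVal φ oe₀ := by
  refine two_mul_beta_le heq (fun oe hoe ha => ?_) ?_ ?_
  · simp only [Finset.mem_filter, Finset.mem_univ, true_and] at ha ⊢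
    exact ha.tail ⟨oe, hoe, rfl, rfl⟩
  · simpa using not_reachAlong_of_acyclic hacyc hpos
  · exact Finset.mem_filter.mpr ⟨Finset.mem_univ _, Relation.ReflTransGen.refl⟩

end Cuts

section PolystableFlow

variable {G : MGraph} {S : Finset G.E}

/-- The flow of a polystable pseudo-root: zero on the edges of `Γ`, and one unit into each
exceptional vertex from each of its two neighbours. -/
def exceptionalFlow (G : MGraph) (S : Finset G.E) : (G.subdiv S).E → ℤ
  | .inl _ => 0
  | .inr (_, b) => if b then -1 else 1

variable {D : (G.subdiv S).V → ℤ} {φ : (G.subdiv S).E → ℤ}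

lemma flowVal_le_one (hD : G.IsPseudoDivisor S D) (hps : G.IsPolystable S D)
    (hacyc : (G.subdiv S).Acyclic φ)
    (heq : ∀ v, 2 * D v + (G.subdiv S).divOf φ v = (G.subdiv S).K v)
    (oe : (G.subdiv S).OEdge) : (G.subdiv S).flowVal φ oe ≤ 1 := by
  by_contra! h
  set R := (G.subdiv S).ReachAlong (fun oe => 0 ≤ (G.subdiv S).flowVal φ oe) ((G.subdiv S).otgt oe)
  have hβ := two_mul_beta_reachAlong_le (D := D) hacyc heq (oe₀ := oe) (by omega)
  have h₀ := (hps _).1.trans (betaPoly_le_beta_subdiv hD R)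
  have : (2 : ℚ) ≤ (G.subdiv S).flowVal φ oe := by exact_mod_cast h
  linarith

lemma flow_inl_eq_zero (hD : G.IsPseudoDivisor S D) (hps : G.IsPolystable S D)
    (hacyc : (G.subdiv S).Acyclic φ)
    (heq : ∀ v, 2 * D v + (G.subdiv S).divOf φ v = (G.subdiv S).K v)
    (e : {e // e ∉ S}) : φ (Sum.inl e) = 0 := by
  by_contra hne
  obtain ⟨b, hb⟩ : ∃ b, 0 < (G.subdiv S).flowVal φ (Sum.inl e, b) := by
    rcases lt_or_gt_of_ne hne with h | h
    · exact ⟨false, Int.neg_pos.mpr h⟩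
    · exact ⟨true, h⟩
  set R := (G.subdiv S).ReachAlong (fun oe => 0 ≤ (G.subdiv S).flowVal φ oe)
    ((G.subdiv S).otgt (Sum.inl e, b))
  have hβ := two_mul_beta_reachAlong_le (D := D) hacyc heq hb
  have hs : ¬R ((G.subdiv S).osrc (Sum.inl e, b)) := not_reachAlong_of_acyclic hacyc hb
  have ht : R ((G.subdiv S).otgt (Sum.inl e, b)) := Relation.ReflTransGen.refl
  have hcr : G.crossing (Finset.univ.filter fun v => R (Sum.inl v)) e := by
    cases b <;> simp_all [crossing, osrc, otgt]
  have h₀ := ((hps _).2 ⟨e, e.2, hcr⟩).trans_le (betaPoly_le_beta_subdiv hD R)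
  have : (1 : ℚ) ≤ (G.subdiv S).flowVal φ (Sum.inl e, b) := by exact_mod_cast hb
  linarith

lemma eq_exceptionalFlow (hD : G.IsPseudoDivisor S D) (hps : G.IsPolystable S D)
    (hacyc : (G.subdiv S).Acyclic φ)
    (heq : ∀ v, 2 * D v + (G.subdiv S).divOf φ v = (G.subdiv S).K v) :
    φ = G.exceptionalFlow S := by
  funext e
  rcases e with e | ⟨x, b⟩
  · exact flow_inl_eq_zero hD hps hacyc heq e
  · have h := heq (Sum.inr x)
    rw [subdiv_divOf_inr, subdiv_K_inr, hD x] at h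
    have h₁ := flowVal_le_one hD hps hacyc heq (Sum.inr (x, false), true)
    have h₂ := flowVal_le_one hD hps hacyc heq (Sum.inr (x, true), false)
    simp only [flowVal, if_true, Bool.false_eq_true, if_false] at h₁ h₂
    cases b
    · change φ _ = 1; omega
    · change φ _ = -1; omega

end PolystableFlow

section Cone

variable {G : MGraph} {S : Finset G.E}

def avgMap (G : MGraph) (S : Finset G.E) : ((G.subdiv S).E → ℝ) →ₗ[ℝ] (G.E → ℝ) :=
  LinearMap.pi fun e =>
    if he : e ∈ S then
      (1 / 2 : ℝ) • (LinearMap.proj (R := ℝ) (φ := fun _ : (G.subdiv S).E => ℝ)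
          (Sum.inr (⟨e, he⟩, false)) +
        LinearMap.proj (R := ℝ) (φ := fun _ : (G.subdiv S).E => ℝ) (Sum.inr (⟨e, he⟩, true)))
    else LinearMap.proj (R := ℝ) (φ := fun _ : (G.subdiv S).E => ℝ) (Sum.inl ⟨e, he⟩)

lemma avgMap_apply_of_mem (z : (G.subdiv S).E → ℝ) {e : G.E} (he : e ∈ S) :
    G.avgMap S z e = (z (Sum.inr (⟨e, he⟩, false)) + z (Sum.inr (⟨e, he⟩, true))) / 2 := by
  simp only [avgMap, LinearMap.pi_apply, dif_pos he]
  change (1 / 2 : ℝ) * (z _ + z _) = _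
  ring

lemma avgMap_apply_of_notMem (z : (G.subdiv S).E → ℝ) {e : G.E} (he : e ∉ S) :
    G.avgMap S z e = z (Sum.inl ⟨e, he⟩) := by
  simp only [avgMap, LinearMap.pi_apply, dif_neg he]
  rfl

def weightedUVec (G : MGraph) (S : Finset G.E) : (G.V → ℝ) →ₗ[ℝ] ((G.subdiv S).E → ℝ) :=
  LinearMap.pi fun z => match z with
    | .inl _ => 0
    | .inr (x, b) =>
      let π := LinearMap.proj (R := ℝ) (φ := fun _ : G.V => ℝ)
      if b then π (G.tgt x) - π (G.src x) else π (G.src x) - π (G.tgt x)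

@[simp] lemma weightedUVec_inl (F : G.V → ℝ) (e : {e // e ∉ S}) :
    G.weightedUVec S F (Sum.inl e) = 0 := rfl

@[simp] lemma weightedUVec_inr_false (F : G.V → ℝ) (x : {e // e ∈ S}) :
    G.weightedUVec S F (Sum.inr (x, false)) = F (G.src x) - F (G.tgt x) := rfl

@[simp] lemma weightedUVec_inr_true (F : G.V → ℝ) (x : {e // e ∈ S}) :
    G.weightedUVec S F (Sum.inr (x, true)) = F (G.tgt x) - F (G.src x) := rfl

lemma weightedUVec_indicator (W : Finset G.V) :
    G.weightedUVec S (fun v => if v ∈ W then 1 else 0) = G.uVec S W := by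
  funext z
  rcases z with e | ⟨x, _ | _⟩
  · simp [uVec]
  all_goals by_cases hs : G.src x ∈ W <;> by_cases ht : G.tgt x ∈ W <;>
    simp [uVec, crossing, hs, ht]

lemma avgMap_deltaMap (x : G.E → ℝ) : G.avgMap S (G.deltaMap S x) = x := by
  funext e
  by_cases he : e ∈ S
  · rw [avgMap_apply_of_mem _ he]; simp [deltaMap]
  · rw [avgMap_apply_of_notMem _ he]; rfl

lemma avgMap_nonneg {y : (G.subdiv S).E → ℝ} (hy : ∀ z, 0 ≤ y z) (e : G.E) :
    0 ≤ G.avgMap S y e := by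
  by_cases he : e ∈ S
  · rw [avgMap_apply_of_mem _ he]
    have := hy (Sum.inr (⟨e, he⟩, false))
    have := hy (Sum.inr (⟨e, he⟩, true))
    positivity
  · rw [avgMap_apply_of_notMem _ he]
    exact hy _

lemma avgMap_weightedUVec (F : G.V → ℝ) : G.avgMap S (G.weightedUVec S F) = 0 := by
  funext e
  by_cases he : e ∈ S
  · rw [avgMap_apply_of_mem _ he]; simp
  · rw [avgMap_apply_of_notMem _ he]; simp

lemma avgMap_eq_zero_of_mem_LSub {z : (G.subdiv S).E → ℝ} (hz : z ∈ G.LSub S) :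
    G.avgMap S z = 0 := by
  suffices G.LSub S ≤ LinearMap.ker (G.avgMap S) from this hz
  rw [LSub, Submodule.span_le]
  rintro _ ⟨W, -, rfl⟩
  rw [SetLike.mem_coe, LinearMap.mem_ker, ← weightedUVec_indicator, avgMap_weightedUVec]

/-- A function constant across the edges outside `S` is a combination of indicators of its
level sets, none of which is cut by an edge outside `S`. -/
lemma weightedUVec_mem_LSub {F : G.V → ℝ} (hF : ∀ e, e ∉ S → F (G.src e) = F (G.tgt e)) :
    G.weightedUVec S F ∈ G.LSub S := by
  have hsum : F = ∑ c ∈ Finset.univ.image F,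
      c • fun v => if v ∈ Finset.univ.filter (F · = c) then (1 : ℝ) else 0 := by
    funext v
    simp [Finset.sum_apply, Finset.mem_filter]
  rw [hsum, map_sum]
  refine Submodule.sum_mem _ fun c _ => ?_
  rw [map_smul]
  refine Submodule.smul_mem _ _
    (Submodule.subset_span ⟨_, fun e hcr => ?_, weightedUVec_indicator _⟩)
  by_contra he
  simp [crossing, hF e he] at hcr

lemma deltaMap_avgMap_sub {y : (G.subdiv S).E → ℝ} {F : G.V → ℝ}
    (hy : ∀ x : {e // e ∈ S}, y (Sum.inr (x, true)) - y (Sum.inr (x, false)) =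
      2 * (F (G.src x) - F (G.tgt x))) :
    G.deltaMap S (G.avgMap S y) - y = G.weightedUVec S F := by
  funext z
  rw [Pi.sub_apply]
  rcases z with ⟨e, he⟩ | ⟨⟨e, he⟩, _ | _⟩
  · simp [deltaMap, avgMap_apply_of_notMem _ he]
  all_goals
    have := hy ⟨e, he⟩
    simp only [deltaMap, avgMap_apply_of_mem _ he, weightedUVec_inr_false, weightedUVec_inr_true]
    linarith

end Cone

section Lambda

variable {G : MGraph} {S : Finset G.E}

lemma flowVal_exceptionalFlow_mul_deltaMap (x : G.E → ℝ) (oe : (G.subdiv S).OEdge) :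
    ((G.subdiv S).flowVal (G.exceptionalFlow S) oe : ℝ) * G.deltaMap S x oe.1 =
      Sum.elim (fun _ => 0) (fun y : {e // e ∈ S} => x y) ((G.subdiv S).otgt oe) -
        Sum.elim (fun _ => 0) (fun y : {e // e ∈ S} => x y) ((G.subdiv S).osrc oe) := by
  obtain ⟨_ | ⟨_, _ | _⟩, _ | _⟩ := oe <;> simp [flowVal, exceptionalFlow, deltaMap, osrc, otgt]

lemma deltaMap_mem_lambdaSet {x : G.E → ℝ} (hx : ∀ e, 0 ≤ x e) :
    G.deltaMap S x ∈ (G.subdiv S).lambdaSet (G.exceptionalFlow S) :=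
  ⟨fun z => by rcases z with e | ⟨e, _⟩ <;> exact hx _,
    fun _ hc => hc.sum_map_eq_zero _ (flowVal_exceptionalFlow_mul_deltaMap x)⟩

/-- `F` is half the potential of `φ · y`, restricted to the vertices of `Γ`. -/
lemma exists_potential_of_mem_lambdaSet {y : (G.subdiv S).E → ℝ}
    (hy : y ∈ (G.subdiv S).lambdaSet (G.exceptionalFlow S)) :
    ∃ F : G.V → ℝ, (∀ e, e ∉ S → F (G.src e) = F (G.tgt e)) ∧
      ∀ x : {e // e ∈ S}, y (Sum.inr (x, true)) - y (Sum.inr (x, false)) =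
        2 * (F (G.src x) - F (G.tgt x)) := by
  obtain ⟨g, hg⟩ := exists_potential
    (w := fun oe => ((G.subdiv S).flowVal (G.exceptionalFlow S) oe : ℝ) * y oe.1)
    (fun oe => by simp [flowVal_flip]) hy.2
  refine ⟨fun v => g (Sum.inl v) / 2, fun e he => ?_, fun x => ?_⟩
  · have := hg (Sum.inl ⟨e, he⟩, true)
    simp only [flowVal, exceptionalFlow, otgt, osrc, ↓reduceIte, Int.cast_zero, zero_mul,
      subdiv_tgt_inl, subdiv_src_inl] at this
    linarith
  · have h₁ := hg (Sum.inr (x, false), true)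
    have h₂ := hg (Sum.inr (x, true), true)
    simp only [flowVal, exceptionalFlow, otgt, osrc, ↓reduceIte, Bool.false_eq_true,
      Int.cast_one, Int.cast_neg, one_mul, neg_mul, subdiv_tgt_inr_false, subdiv_src_inr_false,
      subdiv_tgt_inr_true, subdiv_src_inr_true] at h₁ h₂
    linarith

lemma deltaMap_avgMap_sub_mem_LSub {y : (G.subdiv S).E → ℝ}
    (hy : y ∈ (G.subdiv S).lambdaSet (G.exceptionalFlow S)) :
    G.deltaMap S (G.avgMap S y) - y ∈ G.LSub S := by
  obtain ⟨F, hF, hyF⟩ := exists_potential_of_mem_lambdaSet hy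
  rw [deltaMap_avgMap_sub hyF]
  exact weightedUVec_mem_LSub hF

end Lambda

end MGraph

attribute [local instance] Classical.propDecidable

theorem stmt14_general (G : MGraph) (S : Finset G.E)
    (D : (G.subdiv S).V → ℤ) (hroot : G.IsPseudoRoot S D)
    (hps : G.IsPolystable S D)
    (φ : (G.subdiv S).E → ℤ) (hacyc : (G.subdiv S).Acyclic φ)
    (heq : ∀ v, 2 * D v + (G.subdiv S).divOf φ v = (G.subdiv S).K v) :
    Set.BijOn (fun x : G.E → ℝ => (G.LSub S).mkQ (G.deltaMap S x))
      {x | ∀ e, 0 ≤ x e}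
      ((G.LSub S).mkQ '' ((G.subdiv S).lambdaSet φ)) := by
  obtain rfl := MGraph.eq_exceptionalFlow hroot.1 hps hacyc heq
  refine ⟨fun x hx => ⟨_, MGraph.deltaMap_mem_lambdaSet hx, rfl⟩, fun x _ y _ hxy => ?_, ?_⟩
  · have h := MGraph.avgMap_eq_zero_of_mem_LSub ((Submodule.Quotient.eq _).mp hxy)
    rwa [map_sub, MGraph.avgMap_deltaMap, MGraph.avgMap_deltaMap, sub_eq_zero] at h
  · rintro _ ⟨y, hy, rfl⟩
    exact ⟨G.avgMap S y, MGraph.avgMap_nonneg hy.1,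
      (Submodule.Quotient.eq _).mpr (MGraph.deltaMap_avgMap_sub_mem_LSub hy)⟩

/-- For a polystable root-graph `(Γ, S, D)` with acyclic
flow `φ`, the composite of `δ_S : ℝ^{E(Γ)} → ℝ^{E(Γ^S)}` with the quotient
map `T_S : ℝ^{E(Γ^S)} → ℝ^{E(Γ^S)}/L_S` restricts to an isomorphism (a
bijection) from the cone `ℝ^{E(Γ)}_{≥0}` onto the cone
`κ = T_S(λ_{(Γ,S,D)})`. -/
theorem stmt14 (G : MGraph) (hconn : G.Connected) (S : Finset G.E)
    (D : (G.subdiv S).V → ℤ) (hroot : G.IsPseudoRoot S D)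
    (hps : G.IsPolystable S D)
    (φ : (G.subdiv S).E → ℤ) (hacyc : (G.subdiv S).Acyclic φ)
    (heq : ∀ v, 2 * D v + (G.subdiv S).divOf φ v = (G.subdiv S).K v) :
    Set.BijOn (fun x : G.E → ℝ => (G.LSub S).mkQ (G.deltaMap S x))
      {x | ∀ e, 0 ≤ x e}
      ((G.LSub S).mkQ '' ((G.subdiv S).lambdaSet φ)) :=
  stmt14_general G S D hroot hps φ hacyc heq
end
end
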